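/- arXiv:2511.07341 — 13 statements merged into one kernel-verified Lean document; each statement's English description precedes it below -/
import Mathlib

section
/- Let M and N be metric spaces in which every pair of points is joined by a unique geodesic, and suppose N is Busemann convex. Let A : M → N be a map, and define Δ_A(x, y) = sup_{0 < t < 1} d(A(γ(t)), ξ(t)) / (t(1−t)), where γ is the geodesic joining x to y and ξ is the geodesic joining A(x) to A(y), and κ_A(r) = sup { Δ_A(x, y) : x, y ∈ M, d(x, y) ≤ r }. Assume κ_A(r) is finite for every r ∈ Γ, where Γ = [0, diam M] if M has finite diameter and Γ = [0, ∞) otherwise. Then for every β ∈ [0, 1] and every r ∈ Γ one has κ_A(β r) ≥ β² κ_A(r). -/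
open Set
open scoped Classical

/-- `γ : [0,1] → M` is a geodesic joining `x` to `y`: `γ 0 = x`, `γ 1 = y`, and
`dist (γ s) (γ t) = |s − t| · dist x y` for all `s, t ∈ [0,1]`. -/
def IsGeodesicSeg {M : Type*} [MetricSpace M] (x y : M) (γ : ℝ → M) : Prop :=
  γ 0 = x ∧ γ 1 = y ∧ ∀ s ∈ Icc (0 : ℝ) 1, ∀ t ∈ Icc (0 : ℝ) 1,
    dist (γ s) (γ t) = |s - t| * dist x y

lemma geo_const {M : Type*} [MetricSpace M] {x : M} {γ : ℝ → M}
    (h : IsGeodesicSeg x x γ) : ∀ t ∈ Icc (0 : ℝ) 1, γ t = x := by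
  intro t ht
  have hd := h.2.2 0 ⟨le_refl 0, zero_le_one⟩ t ht
  rw [dist_self, mul_zero, dist_eq_zero] at hd
  rw [← hd, h.1]

lemma geo_sub {M : Type*} [MetricSpace M] {x y : M} {γ : ℝ → M}
    (h : IsGeodesicSeg x y γ) {a β : ℝ} (ha : 0 ≤ a) (hβ : 0 ≤ β)
    (hab : a + β ≤ 1) :
    IsGeodesicSeg (γ a) (γ (a + β)) (fun u => γ (a + u * β)) := by
  refine ⟨by norm_num, by norm_num, fun u hu v hv => ?_⟩
  have huβ : u * β ≤ β := by nlinarith [hu.2, hu.1]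
  have hvβ : v * β ≤ β := by nlinarith [hv.2, hv.1]
  have h1 := h.2.2 (a + u * β) ⟨by nlinarith [hu.1], by nlinarith⟩
      (a + v * β) ⟨by nlinarith [hv.1], by nlinarith⟩
  have h2 := h.2.2 a ⟨ha, by linarith⟩ (a + β) ⟨by linarith, hab⟩
  rw [h1, h2, show a + u * β - (a + v * β) = (u - v) * β from by ring,
    show a - (a + β) = -β from by ring, abs_neg, abs_of_nonneg hβ, abs_mul,
    abs_of_nonneg hβ]
  ring

/-- Quadratic growth of the global curvature bound of a map between
uniquely geodesic metric spaces whose target is Busemann convex: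
`κ_A(βr) ≥ β² κ_A(r)` for all `β ∈ [0,1]` and `r ∈ Γ`. -/
theorem gcb_growth_metric
    {M N : Type*} [MetricSpace M] [MetricSpace N]
    (γM : M → M → ℝ → M) (γN : N → N → ℝ → N)
    -- geodesics exist: `γM x y` joins `x` to `y`, and likewise in `N`
    (hγM : ∀ x y : M, IsGeodesicSeg x y (γM x y))
    (hγN : ∀ a b : N, IsGeodesicSeg a b (γN a b))
    -- geodesics are unique
    (huniqM : ∀ (x y : M) (γ : ℝ → M), IsGeodesicSeg x y γ →
      ∀ t ∈ Icc (0 : ℝ) 1, γ t = γM x y t)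
    (huniqN : ∀ (a b : N) (γ : ℝ → N), IsGeodesicSeg a b γ →
      ∀ t ∈ Icc (0 : ℝ) 1, γ t = γN a b t)
    -- `N` is Busemann convex
    (hBusemann : ∀ (a b c d : N) (γ η : ℝ → N), IsGeodesicSeg a b γ → IsGeodesicSeg c d η →
      ConvexOn ℝ (Icc (0 : ℝ) 1) (fun t => dist (γ t) (η t)))
    (A : M → N)
    -- the point-wise curvature measure `Δ_A` and the global curvature bound `κ_A`
    (Δ : M → M → ℝ) (κ : ℝ → ℝ)
    (hΔ : ∀ x y : M, Δ x y =
      sSup ((fun t => dist (A (γM x y t)) (γN (A x) (A y) t) / (t * (1 - t))) '' Ioo 0 1))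
    (hκ : ∀ r : ℝ, κ r = sSup {v : ℝ | ∃ x y : M, dist x y ≤ r ∧ v = Δ x y})
    -- the range of radii: `Γ = [0, diam M]` if `M` is bounded, `Γ = [0, ∞)` otherwise
    (Γ : Set ℝ)
    (hΓ : Γ = if Bornology.IsBounded (univ : Set M)
      then Icc 0 (Metric.diam (univ : Set M)) else Ici 0)
    -- `κ_A(r)` is well defined (finite) for all `r ∈ Γ`
    (hfin : ∀ r ∈ Γ,
      (∀ x y : M, dist x y ≤ r → BddAbove
        ((fun t => dist (A (γM x y t)) (γN (A x) (A y) t) / (t * (1 - t))) '' Ioo 0 1)) ∧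
      BddAbove {v : ℝ | ∃ x y : M, dist x y ≤ r ∧ v = Δ x y}) :
    ∀ β ∈ Icc (0 : ℝ) 1, ∀ r ∈ Γ, β ^ 2 * κ r ≤ κ (β * r) := by
  intro β hβ r hr
  have hr0 : 0 ≤ r := by
    rw [hΓ] at hr; split_ifs at hr with h
    · exact hr.1
    · exact hr
  have hβr : β * r ∈ Γ := by
    rw [hΓ] at hr ⊢; split_ifs at hr ⊢ with h
    · exact ⟨mul_nonneg hβ.1 hr0, le_trans (by nlinarith [hβ.2]) hr.2⟩
    · exact mul_nonneg hβ.1 hr0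
  rcases isEmpty_or_nonempty M with hM | hM
  · have he : ∀ ρ : ℝ, {v : ℝ | ∃ x y : M, dist x y ≤ ρ ∧ v = Δ x y} = (∅ : Set ℝ) := by
      intro ρ; ext v
      simp only [mem_setOf_eq, mem_empty_iff_false, iff_false, not_exists]
      exact fun x => hM.elim x
    rw [hκ, hκ, he, he, Real.sSup_empty, mul_zero]
  obtain ⟨x0⟩ := hM
  have hΔself : ∀ x : M, Δ x x = 0 := by
    intro x
    have hc1 : ∀ t ∈ Icc (0:ℝ) 1, γM x x t = x := geo_const (hγM x x)
    have hc2 : ∀ t ∈ Icc (0:ℝ) 1, γN (A x) (A x) t = A x := geo_const (hγN (A x) (A x))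
    have him : ((fun t => dist (A (γM x x t)) (γN (A x) (A x) t) / (t * (1 - t))) '' Ioo 0 1)
        = {(0:ℝ)} := by
      apply Subset.antisymm
      · rintro v ⟨t, ht, rfl⟩
        simp [hc1 t (Ioo_subset_Icc_self ht), hc2 t (Ioo_subset_Icc_self ht)]
      · rintro v hv
        rw [mem_singleton_iff] at hv
        subst hv
        refine ⟨1/2, by norm_num, ?_⟩
        show dist (A (γM x x (1/2))) (γN (A x) (A x) (1/2)) / ((1/2) * (1 - 1/2)) = 0
        rw [hc1 (1/2) (by norm_num), hc2 (1/2) (by norm_num), dist_self, zero_div]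
    rw [hΔ, him, csSup_singleton]
  rcases eq_or_lt_of_le hβ.1 with hβeq | hβ0
  · -- β = 0
    have h0mem : (0:ℝ) ∈ {v : ℝ | ∃ x y : M, dist x y ≤ β * r ∧ v = Δ x y} :=
      ⟨x0, x0, by simp [mul_nonneg hβ.1 hr0], (hΔself x0).symm⟩
    have h1 : (0:ℝ) ≤ κ (β * r) := by
      rw [hκ]; exact le_csSup (hfin (β*r) hβr).2 h0mem
    have h2 : β ^ 2 * κ r = 0 := by rw [← hβeq]; ring
    linarith
  -- β > 0
  have hBddA := (hfin (β*r) hβr).1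
  have hBddκ := (hfin (β*r) hβr).2
  have key : ∀ x y : M, dist x y ≤ r → β ^ 2 * Δ x y ≤ κ (β * r) := by
    intro x y hxy
    have hBdd := (hfin r hr).1 x y hxy
    have hγ := hγM x y
    have hξ := hγN (A x) (A y)
    have hDnn : 0 ≤ Δ x y := by
      rw [hΔ]
      refine le_csSup_of_le hBdd ⟨1/2, by norm_num, rfl⟩ ?_
      exact div_nonneg dist_nonneg (by norm_num)
    have hg_le : ∀ u ∈ Icc (0:ℝ) 1,
        dist (A (γM x y u)) (γN (A x) (A y) u) ≤ Δ x y * (u * (1 - u)) := by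
      intro u hu
      rcases eq_or_lt_of_le hu.1 with h0 | h0
      · rw [← h0]; simp [hγ.1, hξ.1]
      rcases eq_or_lt_of_le hu.2 with h1 | h1
      · rw [h1]; simp [hγ.2.1, hξ.2.1]
      · have hpos : 0 < u * (1 - u) := by nlinarith
        have hmem := le_csSup hBdd ⟨u, ⟨h0, h1⟩, rfl⟩
        rw [← hΔ x y] at hmem
        rw [div_le_iff₀ hpos] at hmem
        linarith
    have hstep : ∀ a : ℝ, 0 ≤ a → a + β ≤ 1 → ∀ s : ℝ, s ∈ Ioo (0:ℝ) 1 →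
        dist (A (γM x y (a + s * β))) (γN (A x) (A y) (a + s * β)) ≤
          κ (β * r) * (s * (1 - s)) +
            ((1 - s) * dist (A (γM x y a)) (γN (A x) (A y) a) +
              s * dist (A (γM x y (a + β))) (γN (A x) (A y) (a + β))) := by
      intro a ha hab s hs
      have hsub : IsGeodesicSeg (γM x y a) (γM x y (a+β)) (fun u => γM x y (a + u * β)) :=
        geo_sub hγ ha hβ0.le hab
      have hsubξ : IsGeodesicSeg (γN (A x) (A y) a) (γN (A x) (A y) (a+β))
          (fun u => γN (A x) (A y) (a + u * β)) := geo_sub hξ ha hβ0.le hab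
      have hd' : dist (γM x y a) (γM x y (a+β)) ≤ β * r := by
        have hh := hγ.2.2 a ⟨ha, by linarith⟩ (a+β) ⟨by linarith, hab⟩
        rw [hh, show a - (a+β) = -β from by ring, abs_neg, abs_of_nonneg hβ0.le]
        exact mul_le_mul_of_nonneg_left hxy hβ0.le
      have huq : γM (γM x y a) (γM x y (a+β)) s = γM x y (a + s * β) :=
        (huniqM _ _ _ hsub s ⟨hs.1.le, hs.2.le⟩).symm
      have hspos : 0 < s * (1 - s) := by nlinarith [hs.1, hs.2]
      have h1 : dist (A (γM x y (a + s*β))) (γN (A (γM x y a)) (A (γM x y (a+β))) s) ≤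
          κ (β*r) * (s*(1-s)) := by
        have hmem : dist (A (γM (γM x y a) (γM x y (a+β)) s))
            (γN (A (γM x y a)) (A (γM x y (a+β))) s) / (s*(1-s)) ≤
            Δ (γM x y a) (γM x y (a+β)) := by
          rw [hΔ]
          exact le_csSup (hBddA _ _ hd') ⟨s, hs, rfl⟩
        have h2 : Δ (γM x y a) (γM x y (a+β)) ≤ κ (β*r) := by
          rw [hκ]; exact le_csSup hBddκ ⟨_, _, hd', rfl⟩
        rw [huq, div_le_iff₀ hspos] at hmem
        nlinarith [mul_le_mul_of_nonneg_right h2 hspos.le]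
      have hη := hγN (A (γM x y a)) (A (γM x y (a+β)))
      have hconv := hBusemann _ _ _ _ _ _ hη hsubξ
      have hcv : dist (γN (A (γM x y a)) (A (γM x y (a+β))) s) (γN (A x) (A y) (a + s*β)) ≤
          (1-s) * dist (A (γM x y a)) (γN (A x) (A y) a)
          + s * dist (A (γM x y (a+β))) (γN (A x) (A y) (a+β)) := by
        have h := hconv.2 (mem_Icc.mpr ⟨le_refl (0:ℝ), zero_le_one⟩)
          (mem_Icc.mpr ⟨zero_le_one, le_refl (1:ℝ)⟩)
          (by linarith [hs.2] : (0:ℝ) ≤ 1 - s) hs.1.le (by ring)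
        simp only [smul_eq_mul, mul_zero, mul_one, one_mul, zero_add, zero_mul,
          add_zero] at h
        rw [hη.1, hη.2.1] at h
        exact h
      calc dist (A (γM x y (a + s*β))) (γN (A x) (A y) (a + s*β))
          ≤ dist (A (γM x y (a + s*β))) (γN (A (γM x y a)) (A (γM x y (a+β))) s)
            + dist (γN (A (γM x y a)) (A (γM x y (a+β))) s) (γN (A x) (A y) (a + s*β)) :=
            dist_triangle _ _ _
        _ ≤ _ := by linarith [h1, hcv]
    -- main pointwise bound
    have hmid : ∀ t ∈ Ioo (0:ℝ) 1, ∃ s ∈ Ioo (0:ℝ) 1,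
        t * (1 - t) ≤ 2 * (s * (1 - s)) ∧
        dist (A (γM x y t)) (γN (A x) (A y) t) ≤
          κ (β*r) * (s*(1-s)) + Δ x y * (t*(1-t)) - Δ x y * β^2 * (s*(1-s)) := by
      intro t ht
      obtain ⟨a, ha0, hab, hat1, hat2, hkey⟩ :
          ∃ a : ℝ, 0 ≤ a ∧ a + β ≤ 1 ∧ a < t ∧ t < a + β ∧
            t * (1 - t) ≤ 2 * (((t - a)/β) * (1 - (t - a)/β)) := by
        rcases le_or_gt t (β/2) with h1 | h1
        · refine ⟨0, le_refl 0, by linarith [hβ.2], ht.1, by linarith, ?_⟩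
          simp only [sub_zero]
          have hu1 : 0 < t/β := div_pos ht.1 hβ0
          have hu2 : t/β ≤ 1/2 := (div_le_iff₀ hβ0).mpr (by linarith)
          have hu3 : t ≤ t/β := (le_div_iff₀ hβ0).mpr (by nlinarith [ht.1.le, hβ.2])
          nlinarith [mul_nonneg ht.1.le ht.1.le,
            mul_nonneg hu1.le (by linarith : (0:ℝ) ≤ 1 - 2*(t/β))]
        rcases le_or_gt (1 - β/2) t with h2 | h2
        · refine ⟨1 - β, by linarith [hβ.2], by linarith, by linarith, by linarith [ht.2], ?_⟩
          set q : ℝ := (t - (1-β))/β with hq_def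
          have hqβ : q * β = t - (1-β) := div_mul_cancel₀ _ hβ0.ne'
          have hq2 : 1/2 ≤ q := (le_div_iff₀ hβ0).mpr (by linarith)
          have hq3 : q ≤ 1 := (div_le_one hβ0).mpr (by linarith [ht.2])
          have hq4 : (1 - q) * β = 1 - t := by nlinarith [hqβ]
          have hq5 : 1 - t ≤ 1 - q := by nlinarith [hqβ, hβ.2, hq3]
          nlinarith [mul_nonneg (by linarith : (0:ℝ) ≤ 2*q - 1) (by linarith : (0:ℝ) ≤ 1 - q),
            mul_nonneg (by linarith [ht.2] : (0:ℝ) ≤ 1 - t) (by linarith [ht.2] : (0:ℝ) ≤ 1 - t)]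
        · refine ⟨t - β/2, by linarith, by linarith, by linarith, by linarith, ?_⟩
          have hu : (t - (t - β/2))/β = 1/2 := by
            rw [show t - (t - β/2) = β/2 from by ring, div_eq_iff hβ0.ne']
            ring
          rw [hu]
          nlinarith [ht.1, ht.2]
      set s : ℝ := (t - a)/β with hs_def
      have hsβ : s * β = t - a := div_mul_cancel₀ _ hβ0.ne'
      have hs0 : 0 < s := div_pos (by linarith) hβ0
      have hs1 : s < 1 := (div_lt_one hβ0).mpr (by linarith)
      refine ⟨s, ⟨hs0, hs1⟩, hkey, ?_⟩
      have hts : a + s * β = t := by rw [hsβ]; ring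
      have h3 := hstep a ha0 hab s ⟨hs0, hs1⟩
      rw [hts] at h3
      have h4 := hg_le a ⟨ha0, by linarith⟩
      have h5 := hg_le (a+β) ⟨by linarith, hab⟩
      have hid : Δ x y * ((1-s)*(a*(1-a))) + Δ x y * (s*((a+β)*(1-(a+β)))) =
          Δ x y * (t*(1-t)) - Δ x y * β^2 * (s*(1-s)) := by
        rw [← hts]; ring
      nlinarith [h3, mul_le_mul_of_nonneg_left h4 (by linarith : (0:ℝ) ≤ 1 - s),
        mul_le_mul_of_nonneg_left h5 hs0.le, hid]
    -- conclude by contradiction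
    by_contra hcon
    push_neg at hcon
    have hneg : κ (β*r) - Δ x y * β^2 < 0 := by nlinarith [hcon]
    have hup : ∀ v ∈ ((fun t => dist (A (γM x y t)) (γN (A x) (A y) t) / (t * (1 - t)))
        '' Ioo 0 1), v ≤ Δ x y + (κ (β*r) - Δ x y * β^2)/2 := by
      rintro v ⟨t, ht, rfl⟩
      obtain ⟨s, hs, h2s, hb⟩ := hmid t ht
      have htpos : 0 < t * (1-t) := by nlinarith [ht.1, ht.2]
      rw [div_le_iff₀ htpos]
      nlinarith [hb, mul_le_mul_of_nonpos_left h2s hneg.le]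
    have hD_le : Δ x y ≤ Δ x y + (κ (β*r) - Δ x y * β^2)/2 := by
      nth_rewrite 1 [hΔ x y]
      exact csSup_le ⟨_, ⟨1/2, by norm_num, rfl⟩⟩ hup
    linarith
  -- assemble
  rw [hκ r]
  have hne : {v : ℝ | ∃ x y : M, dist x y ≤ r ∧ v = Δ x y}.Nonempty :=
    ⟨Δ x0 x0, x0, x0, by simp [hr0], rfl⟩
  have hsup_le : sSup {v : ℝ | ∃ x y : M, dist x y ≤ r ∧ v = Δ x y} ≤ κ (β*r) / β^2 := by
    apply csSup_le hne
    rintro v ⟨x, y, hxy, rfl⟩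
    rw [le_div_iff₀ (by positivity : (0:ℝ) < β^2)]
    linarith [key x y hxy]
  calc β ^ 2 * sSup {v : ℝ | ∃ x y : M, dist x y ≤ r ∧ v = Δ x y}
      ≤ β ^ 2 * (κ (β*r) / β^2) :=
        mul_le_mul_of_nonneg_left hsup_le (by positivity)
    _ = κ (β*r) := by field_simp
end

section
/- Let E and F be real normed vector spaces, Q ⊆ E a convex set, and A : Q → F a map whose global curvature bound κ_A(r) is finite for every r ≥ 0 with r ≤ diam Q. Then for every β ∈ [0, 1] and every such r one has κ_A(β r) ≥ β² κ_A(r). -/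
open scoped ENNReal

/-- The global curvature bound of a map `A` on a convex set `Q` of a normed space:
`κ_A(r) = sup { ‖t·A(y) + (1−t)·A(x) − A(x + t(y−x))‖ / (t(1−t)) :
  x, y ∈ Q, ‖y − x‖ ≤ r, 0 < t < 1 }`, a value in `[0, +∞]`. -/
noncomputable def gcb {E F : Type*} [NormedAddCommGroup E] [NormedSpace ℝ E]
    [NormedAddCommGroup F] [NormedSpace ℝ F] (Q : Set E) (A : E → F) (r : ℝ) : ℝ≥0∞ :=
  ⨆ (x : E) (_ : x ∈ Q) (y : E) (_ : y ∈ Q) (t : ℝ) (_ : t ∈ Set.Ioo (0 : ℝ) 1)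
    (_ : ‖y - x‖ ≤ r),
    ENNReal.ofReal (‖t • A y + (1 - t) • A x - A (x + t • (y - x))‖ / (t * (1 - t)))

lemma le_gcb {E F : Type*} [NormedAddCommGroup E] [NormedSpace ℝ E]
    [NormedAddCommGroup F] [NormedSpace ℝ F] (Q : Set E) (A : E → F) {r : ℝ} {x y : E}
    (hx : x ∈ Q) (hy : y ∈ Q) {t : ℝ} (ht : t ∈ Set.Ioo (0 : ℝ) 1) (hxy : ‖y - x‖ ≤ r) :
    ENNReal.ofReal (‖t • A y + (1 - t) • A x - A (x + t • (y - x))‖ / (t * (1 - t)))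
      ≤ gcb Q A r := by
  simp only [gcb]
  exact le_iSup_of_le x (le_iSup_of_le hx (le_iSup_of_le y (le_iSup_of_le hy
    (le_iSup_of_le t (le_iSup_of_le ht (le_iSup_of_le hxy le_rfl))))))

lemma norm_le_gcb {E F : Type*} [NormedAddCommGroup E] [NormedSpace ℝ E]
    [NormedAddCommGroup F] [NormedSpace ℝ F] (Q : Set E) (A : E → F) {r : ℝ} {x y : E}
    (hx : x ∈ Q) (hy : y ∈ Q) {t : ℝ} (ht : t ∈ Set.Ioo (0 : ℝ) 1) (hxy : ‖y - x‖ ≤ r)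
    (hK : gcb Q A r ≠ ∞) :
    ‖t • A y + (1 - t) • A x - A (x + t • (y - x))‖
      ≤ (gcb Q A r).toReal * (t * (1 - t)) := by
  have h := le_gcb Q A hx hy ht hxy
  rw [ENNReal.ofReal_le_iff_le_toReal hK] at h
  have htt : 0 < t * (1 - t) := mul_pos ht.1 (by linarith [ht.2])
  calc ‖t • A y + (1 - t) • A x - A (x + t • (y - x))‖
      = ‖t • A y + (1 - t) • A x - A (x + t • (y - x))‖ / (t * (1 - t)) * (t * (1 - t)) := by
        rw [div_mul_cancel₀ _ htt.ne']
    _ ≤ (gcb Q A r).toReal * (t * (1 - t)) := by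
        exact mul_le_mul_of_nonneg_right h htt.le

/-- If the global curvature bound `κ_A(r)` is finite for every
`0 ≤ r ≤ diam Q`, then `κ_A(βr) ≥ β² κ_A(r)` for every `β ∈ [0,1]` and every such `r`. -/
theorem gcb_growth {E F : Type*} [NormedAddCommGroup E] [NormedSpace ℝ E]
    [NormedAddCommGroup F] [NormedSpace ℝ F]
    (Q : Set E) (hQ : Convex ℝ Q) (A : E → F)
    (hfin : ∀ r : ℝ, 0 ≤ r → ENNReal.ofReal r ≤ EMetric.diam Q → gcb Q A r ≠ ∞) :
    ∀ β ∈ Set.Icc (0 : ℝ) 1, ∀ r : ℝ, 0 ≤ r → ENNReal.ofReal r ≤ EMetric.diam Q →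
      ENNReal.ofReal (β ^ 2) * gcb Q A r ≤ gcb Q A (β * r) := by
  intro β hβ r hr hrd
  rcases eq_or_lt_of_le hβ.1 with h0 | h0
  · simp [← h0]
  rcases eq_or_lt_of_le hβ.2 with h1 | h1
  · simp [h1]
  -- now 0 < β < 1
  have hK : gcb Q A r ≠ ∞ := hfin r hr hrd
  set Kr : ℝ := (gcb Q A r).toReal with hKrdef
  have hKr0 : 0 ≤ Kr := ENNReal.toReal_nonneg
  have main : gcb Q A r ≤ gcb Q A (β * r) + ENNReal.ofReal (1 - β ^ 2) * gcb Q A r := by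
    conv_lhs => rw [gcb]
    refine iSup_le fun x => iSup_le fun hx => iSup_le fun y => iSup_le fun hy =>
      iSup_le fun t => iSup_le fun ht => iSup_le fun hxy => ?_
    obtain ⟨ht0, ht1⟩ := ht
    have htt : 0 < t * (1 - t) := mul_pos ht0 (by linarith)
    set s₁ : ℝ := t * (1 - β) with hs₁def
    set s₂ : ℝ := t * (1 - β) + β with hs₂def
    have hβ1 : (0:ℝ) < 1 - β := by linarith
    have ht1' : (0:ℝ) < 1 - t := by linarith
    have hs₁ : s₁ ∈ Set.Ioo (0 : ℝ) 1 :=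
      ⟨mul_pos ht0 hβ1, by nlinarith [mul_pos ht0 h0]⟩
    have hs₂ : s₂ ∈ Set.Ioo (0 : ℝ) 1 :=
      ⟨by nlinarith [mul_pos ht0 hβ1], by nlinarith [mul_pos hβ1 ht1']⟩
    set u : E := x + s₁ • (y - x) with hudef
    set v : E := x + s₂ • (y - x) with hvdef
    have hu : u ∈ Q := by
      have h := hQ hx hy (sub_nonneg.mpr hs₁.2.le) hs₁.1.le (by ring)
      have he : x + s₁ • (y - x) = (1 - s₁) • x + s₁ • y := by module
      rw [hudef, he]; exact h
    have hv : v ∈ Q := by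
      have h := hQ hx hy (sub_nonneg.mpr hs₂.2.le) hs₂.1.le (by ring)
      have he : x + s₂ • (y - x) = (1 - s₂) • x + s₂ • y := by module
      rw [hvdef, he]; exact h
    have hvu : v - u = β • (y - x) := by
      rw [hudef, hvdef, hs₁def, hs₂def]; module
    have huv : ‖v - u‖ ≤ β * r := by
      rw [hvu, norm_smul, Real.norm_eq_abs, abs_of_pos h0]
      exact mul_le_mul_of_nonneg_left hxy h0.le
    have hpt : u + t • (v - u) = x + t • (y - x) := by
      rw [hudef, hvdef, hs₁def, hs₂def]; module
    have key : t • A y + (1 - t) • A x - A (x + t • (y - x))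
        = (t • A v + (1 - t) • A u - A (u + t • (v - u)))
          + t • (s₂ • A y + (1 - s₂) • A x - A v)
          + (1 - t) • (s₁ • A y + (1 - s₁) • A x - A u) := by
      rw [hpt, hudef, hvdef, hs₁def, hs₂def]
      module
    have hb₁ : ‖s₁ • A y + (1 - s₁) • A x - A (x + s₁ • (y - x))‖ ≤ Kr * (s₁ * (1 - s₁)) :=
      norm_le_gcb Q A hx hy hs₁ hxy hK
    have hb₂ : ‖s₂ • A y + (1 - s₂) • A x - A (x + s₂ • (y - x))‖ ≤ Kr * (s₂ * (1 - s₂)) :=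
      norm_le_gcb Q A hx hy hs₂ hxy hK
    have hT : ENNReal.ofReal (‖t • A v + (1 - t) • A u - A (u + t • (v - u))‖ / (t * (1 - t)))
        ≤ gcb Q A (β * r) := le_gcb Q A hu hv ⟨ht0, ht1⟩ huv
    have hnorm : ‖t • A y + (1 - t) • A x - A (x + t • (y - x))‖
        ≤ ‖t • A v + (1 - t) • A u - A (u + t • (v - u))‖ + (1 - β ^ 2) * (t * (1 - t)) * Kr := by
      rw [key]
      have h3 := norm_add₃_le (a := t • A v + (1 - t) • A u - A (u + t • (v - u)))
        (b := t • (s₂ • A y + (1 - s₂) • A x - A v))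
        (c := (1 - t) • (s₁ • A y + (1 - s₁) • A x - A u))
      refine h3.trans ?_
      rw [norm_smul, norm_smul, Real.norm_eq_abs, Real.norm_eq_abs,
        abs_of_pos ht0, abs_of_pos (by linarith : (0:ℝ) < 1 - t)]
      have hb₁' : ‖s₁ • A y + (1 - s₁) • A x - A u‖ ≤ Kr * (s₁ * (1 - s₁)) := by
        rw [hudef]; exact hb₁
      have hb₂' : ‖s₂ • A y + (1 - s₂) • A x - A v‖ ≤ Kr * (s₂ * (1 - s₂)) := by
        rw [hvdef]; exact hb₂
      have e : t * (Kr * (s₂ * (1 - s₂))) + (1 - t) * (Kr * (s₁ * (1 - s₁)))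
          = (1 - β ^ 2) * (t * (1 - t)) * Kr := by
        rw [hs₁def, hs₂def]; ring
      nlinarith [mul_le_mul_of_nonneg_left hb₂' ht0.le,
        mul_le_mul_of_nonneg_left hb₁' (by linarith : (0:ℝ) ≤ 1 - t)]
    have hdiv : ‖t • A y + (1 - t) • A x - A (x + t • (y - x))‖ / (t * (1 - t))
        ≤ ‖t • A v + (1 - t) • A u - A (u + t • (v - u))‖ / (t * (1 - t)) + (1 - β ^ 2) * Kr := by
      rw [div_le_iff₀ htt, add_mul, div_mul_cancel₀ _ htt.ne']
      calc ‖t • A y + (1 - t) • A x - A (x + t • (y - x))‖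
          ≤ ‖t • A v + (1 - t) • A u - A (u + t • (v - u))‖ + (1 - β ^ 2) * (t * (1 - t)) * Kr :=
            hnorm
        _ = ‖t • A v + (1 - t) • A u - A (u + t • (v - u))‖ + (1 - β ^ 2) * Kr * (t * (1 - t)) := by
            ring
    calc ENNReal.ofReal (‖t • A y + (1 - t) • A x - A (x + t • (y - x))‖ / (t * (1 - t)))
        ≤ ENNReal.ofReal (‖t • A v + (1 - t) • A u - A (u + t • (v - u))‖ / (t * (1 - t))
            + (1 - β ^ 2) * Kr) := ENNReal.ofReal_le_ofReal hdiv
      _ = ENNReal.ofReal (‖t • A v + (1 - t) • A u - A (u + t • (v - u))‖ / (t * (1 - t)))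
            + ENNReal.ofReal ((1 - β ^ 2) * Kr) := by
          rw [ENNReal.ofReal_add (by positivity) (mul_nonneg (by nlinarith) hKr0)]
      _ ≤ gcb Q A (β * r) + ENNReal.ofReal (1 - β ^ 2) * gcb Q A r := by
          gcongr
          rw [ENNReal.ofReal_mul (by nlinarith), hKrdef, ENNReal.ofReal_toReal hK]
  -- conclude by cancellation
  have hc : ENNReal.ofReal (1 - β ^ 2) * gcb Q A r ≠ ∞ :=
    ENNReal.mul_ne_top ENNReal.ofReal_ne_top hK
  rw [← ENNReal.add_le_add_iff_right hc]
  calc ENNReal.ofReal (β ^ 2) * gcb Q A r + ENNReal.ofReal (1 - β ^ 2) * gcb Q A r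
      = (ENNReal.ofReal (β ^ 2) + ENNReal.ofReal (1 - β ^ 2)) * gcb Q A r := by
        rw [add_mul]
    _ = gcb Q A r := by
        rw [← ENNReal.ofReal_add (by positivity) (by nlinarith)]
        norm_num
    _ ≤ gcb Q A (β * r) + ENNReal.ofReal (1 - β ^ 2) * gcb Q A r := main
end

section
/- Let E and F be real normed vector spaces, Q ⊆ E a convex set, and A : Q → F a map such that for all x, y ∈ Q the one-sided directional derivative DA(x)[y − x] = lim_{t → 0⁺} (A(x + t(y − x)) − A(x)) / t exists in F. Then for all x, y ∈ Q one has ‖A(y) − A(x) − DA(x)[y − x]‖ ≤ κ_A(‖y − x‖). -/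
open scoped ENNReal Topology

/-- If for all `x, y ∈ Q` the one-sided directional derivative
`DA(x)[y−x] = lim_{t→0⁺} (A(x + t(y−x)) − A(x))/t` exists, then the linear
approximation error is globally bounded by the curvature:
`‖A(y) − A(x) − DA(x)[y−x]‖ ≤ κ_A(‖y−x‖)`. -/
theorem linear_approximation_bound_of_gcb
    {E F : Type*} [NormedAddCommGroup E] [NormedSpace ℝ E]
    [NormedAddCommGroup F] [NormedSpace ℝ F]
    (Q : Set E) (hQ : Convex ℝ Q) (A : E → F)
    (D : E → E → F)
    (hD : ∀ x ∈ Q, ∀ y ∈ Q,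
      Filter.Tendsto (fun t : ℝ => t⁻¹ • (A (x + t • (y - x)) - A x))
        (𝓝[>] (0 : ℝ)) (𝓝 (D x y))) :
    ∀ x ∈ Q, ∀ y ∈ Q,
      ENNReal.ofReal ‖A y - A x - D x y‖ ≤ gcb Q A ‖y - x‖ := by
  intro x hx y hy
  by_cases htop : gcb Q A ‖y - x‖ = ⊤
  · simp [htop]
  set K := (gcb Q A ‖y - x‖).toReal with hK
  rw [ENNReal.ofReal_le_iff_le_toReal htop]
  -- key pointwise bound for t ∈ (0,1)
  have key : ∀ t : ℝ, t ∈ Set.Ioo (0 : ℝ) 1 →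
      ‖A y - A x - t⁻¹ • (A (x + t • (y - x)) - A x)‖ ≤ K * (1 - t) := by
    intro t ht
    have hle : ENNReal.ofReal
        (‖t • A y + (1 - t) • A x - A (x + t • (y - x))‖ / (t * (1 - t)))
        ≤ gcb Q A ‖y - x‖ := by
      refine le_trans ?_ (le_iSup₂ (f := fun x _ => _) x hx)
      refine le_trans ?_ (le_iSup₂ (f := fun y _ => _) y hy)
      refine le_trans ?_ (le_iSup₂ (f := fun t _ => _) t ht)
      exact le_iSup (fun _ : ‖y - x‖ ≤ ‖y - x‖ => _) le_rfl
    rw [ENNReal.ofReal_le_iff_le_toReal htop] at hle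
    have ht0 : 0 < t := ht.1
    have ht1 : 0 < 1 - t := by linarith [ht.2]
    have hbound : ‖t • A y + (1 - t) • A x - A (x + t • (y - x))‖ ≤ K * (t * (1 - t)) := by
      rw [div_le_iff₀ (by positivity)] at hle
      linarith
    have heq : A y - A x - t⁻¹ • (A (x + t • (y - x)) - A x)
        = t⁻¹ • (t • A y + (1 - t) • A x - A (x + t • (y - x))) := by
      match_scalars <;> field_simp <;> ring
    calc ‖A y - A x - t⁻¹ • (A (x + t • (y - x)) - A x)‖
        = ‖t‖⁻¹ * ‖t • A y + (1 - t) • A x - A (x + t • (y - x))‖ := by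
          rw [heq, norm_smul, norm_inv, Real.norm_eq_abs]
      _ ≤ ‖t‖⁻¹ * (K * (t * (1 - t))) := by
          gcongr
      _ = K * (1 - t) := by
          rw [Real.norm_eq_abs, abs_of_pos ht0]; field_simp
  -- take the limit t → 0⁺
  have hf : Filter.Tendsto (fun t : ℝ => ‖A y - A x - t⁻¹ • (A (x + t • (y - x)) - A x)‖)
      (𝓝[>] (0 : ℝ)) (𝓝 ‖A y - A x - D x y‖) :=
    ((tendsto_const_nhds.sub (hD x hx y hy)).norm)
  have hg : Filter.Tendsto (fun t : ℝ => K * (1 - t)) (𝓝[>] (0 : ℝ)) (𝓝 K) := by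
    have : Filter.Tendsto (fun t : ℝ => K * (1 - t)) (𝓝 (0 : ℝ)) (𝓝 (K * (1 - 0))) :=
      ((continuous_const.mul (continuous_const.sub continuous_id)).tendsto 0)
    simpa using this.mono_left nhdsWithin_le_nhds
  have hev : ∀ᶠ t in 𝓝[>] (0 : ℝ),
      ‖A y - A x - t⁻¹ • (A (x + t • (y - x)) - A x)‖ ≤ K * (1 - t) := by
    filter_upwards [Ioo_mem_nhdsGT_of_mem (by norm_num : (0:ℝ) ∈ Set.Ico 0 1)] with t ht
    exact key t ht
  exact le_of_tendsto_of_tendsto hf hg hev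
end

section
/- Let E and F be real normed vector spaces, Q ⊆ E a convex set, and A : Q → F a differentiable map whose derivative is Hölder continuous of degree ν ∈ [0, 1] with constant H_ν > 0, i.e. ‖DA(x) − DA(y)‖_op ≤ H_ν ‖x − y‖^ν for all x, y ∈ Q, where ‖·‖_op is the operator norm. Then for all r ≥ 0 one has κ_A(r) ≤ (2^{1−ν} H_ν / (1 + ν)) · r^{1+ν}. -/
open scoped ENNReal

private lemma rpow_add_rpow_le_two_rpow {ν t : ℝ} (hν0 : 0 ≤ ν) (hν1 : ν ≤ 1)
    (ht0 : 0 ≤ t) (ht1 : t ≤ 1) : t ^ ν + (1 - t) ^ ν ≤ 2 ^ (1 - ν) := by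
  have hc := (Real.concaveOn_rpow hν0 hν1).2 (Set.mem_Ici.mpr ht0)
    (Set.mem_Ici.mpr (by linarith : (0:ℝ) ≤ 1 - t))
    (by norm_num : (0:ℝ) ≤ 1/2) (by norm_num : (0:ℝ) ≤ 1/2) (by norm_num)
  simp only [smul_eq_mul] at hc
  rw [show (1/2 * t + 1/2 * (1 - t) : ℝ) = 1/2 by ring] at hc
  rw [one_div, Real.inv_rpow (by norm_num : (0:ℝ) ≤ 2)] at hc
  rw [Real.rpow_sub (by norm_num : (0:ℝ) < 2), Real.rpow_one, div_eq_mul_inv]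
  linarith

private lemma taylor_aux {E F : Type*} [NormedAddCommGroup E] [NormedSpace ℝ E]
    [NormedAddCommGroup F] [NormedSpace ℝ F]
    {Q : Set E} (hQ : Convex ℝ Q) {A : E → F}
    {ν H : ℝ} (hν : ν ∈ Set.Icc (0 : ℝ) 1) (hH : 0 < H)
    {A' : E → E →L[ℝ] F}
    (hA' : ∀ x ∈ Q, HasFDerivWithinAt A (A' x) Q x)
    (hHolder : ∀ x ∈ Q, ∀ y ∈ Q, ‖A' x - A' y‖ ≤ H * ‖x - y‖ ^ ν)
    {a b : E} (ha : a ∈ Q) (hb : b ∈ Q) :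
    ‖A b - A a - A' a (b - a)‖ ≤ H / (1 + ν) * ‖b - a‖ ^ (1 + ν) := by
  obtain ⟨hν0, hν1⟩ := hν
  have hp : (0:ℝ) < 1 + ν := by linarith
  rcases eq_or_ne b a with rfl | hne
  · simp only [sub_self, map_zero, norm_zero]
    positivity
  have hK : 0 < ‖b - a‖ := norm_pos_iff.mpr (sub_ne_zero.mpr hne)
  set K := ‖b - a‖ with hKdef
  set γ : ℝ → E := fun s => a + s • (b - a) with hγdef
  have hγmem : Set.MapsTo γ (Set.Icc (0:ℝ) 1) Q := fun s hs =>
    hQ.add_smul_sub_mem ha hb hs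
  have hγ : ∀ s : ℝ, HasDerivAt γ (b - a) s := fun s => by
    simpa [hγdef] using ((hasDerivAt_id s).smul_const (b - a)).const_add a
  set g : ℝ → F := fun s => A (γ s) - s • (A' a) (b - a) - A a with hgdef
  set g' : ℝ → F := fun s => (A' (γ s)) (b - a) - (A' a) (b - a) with hg'def
  have hg : ∀ s ∈ Set.Icc (0:ℝ) 1, HasDerivWithinAt g (g' s) (Set.Icc 0 1) s := by
    intro s hs
    have h1 : HasDerivWithinAt (fun u => A (γ u)) ((A' (γ s)) (b - a)) (Set.Icc 0 1) s :=
      (hA' (γ s) (hγmem hs)).comp_hasDerivWithinAt s ((hγ s).hasDerivWithinAt) hγmem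
    have h2 : HasDerivWithinAt (fun u : ℝ => u • (A' a) (b - a)) ((A' a) (b - a))
        (Set.Icc 0 1) s := by
      simpa using ((hasDerivAt_id s).smul_const ((A' a) (b - a))).hasDerivWithinAt
    simpa [hgdef, hg'def] using (h1.sub h2).sub_const (A a)
  set C := H * K ^ (1 + ν) with hCdef
  set B : ℝ → ℝ := fun s => C / (1 + ν) * s ^ (1 + ν) with hBdef
  set B' : ℝ → ℝ := fun s => C * s ^ ν with hB'def
  have hB : ∀ s : ℝ, HasDerivAt B (B' s) s := by
    intro s
    have h := (Real.hasDerivAt_rpow_const (x := s) (p := 1 + ν)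
      (Or.inr (by linarith))).const_mul (C / (1 + ν))
    refine h.congr_deriv ?_
    rw [show (1:ℝ) + ν - 1 = ν by ring]
    simp only [hB'def]
    field_simp
  have hbound : ∀ s ∈ Set.Ico (0:ℝ) 1, ‖g' s‖ ≤ B' s := by
    intro s hs
    have h1 : ‖g' s‖ ≤ ‖A' (γ s) - A' a‖ * K := by
      have := (A' (γ s) - A' a).le_opNorm (b - a)
      simpa [ContinuousLinearMap.sub_apply, hg'def] using this
    have hn : ‖γ s - a‖ = s * K := by
      simp [hγdef, norm_smul, abs_of_nonneg hs.1, hKdef]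
    have h2 : ‖A' (γ s) - A' a‖ ≤ H * (s * K) ^ ν := by
      have := hHolder (γ s) (hγmem (Set.mem_Icc_of_Ico hs)) a ha
      rwa [hn] at this
    calc ‖g' s‖ ≤ H * (s * K) ^ ν * K :=
          h1.trans (mul_le_mul_of_nonneg_right h2 hK.le)
      _ = B' s := by
          rw [Real.mul_rpow hs.1 hK.le]
          simp only [hB'def, hCdef]
          rw [Real.rpow_add hK, Real.rpow_one]
          ring
  have hgc : ContinuousOn g (Set.Icc 0 1) := fun s hs => (hg s hs).continuousWithinAt
  have hg' : ∀ s ∈ Set.Ico (0:ℝ) 1, HasDerivWithinAt g (g' s) (Set.Ici s) s := fun s hs =>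
    (hg s (Set.Ico_subset_Icc_self hs)).mono_of_mem_nhdsWithin (Icc_mem_nhdsGE_of_mem hs)
  have ha0 : ‖g 0‖ ≤ B 0 := by
    simp [hgdef, hγdef, hBdef, Real.zero_rpow (ne_of_gt hp)]
  have key := image_norm_le_of_norm_deriv_right_le_deriv_boundary hgc hg' ha0 hB hbound
    (Set.mem_Icc.mpr ⟨zero_le_one, le_refl 1⟩)
  have h1 : g 1 = A b - A a - (A' a) (b - a) := by
    simp only [hgdef, hγdef, one_smul, add_sub_cancel]
    rw [sub_right_comm]
  have h2 : B 1 = H / (1 + ν) * K ^ (1 + ν) := by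
    simp only [hBdef, hCdef, Real.one_rpow]
    ring
  rw [h1, h2] at key
  exact key

/-- If `A` is differentiable on `Q` with a `ν`-Hölder continuous
derivative of constant `H_ν > 0`, then `κ_A(r) ≤ 2^{1−ν} H_ν r^{1+ν} / (1+ν)`. -/
theorem gcb_le_of_holder_derivative
    {E F : Type*} [NormedAddCommGroup E] [NormedSpace ℝ E]
    [NormedAddCommGroup F] [NormedSpace ℝ F]
    (Q : Set E) (hQ : Convex ℝ Q) (A : E → F)
    (ν H : ℝ) (hν : ν ∈ Set.Icc (0 : ℝ) 1) (hH : 0 < H)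
    (A' : E → E →L[ℝ] F)
    (hA' : ∀ x ∈ Q, HasFDerivWithinAt A (A' x) Q x)
    (hHolder : ∀ x ∈ Q, ∀ y ∈ Q, ‖A' x - A' y‖ ≤ H * ‖x - y‖ ^ ν) :
    ∀ r : ℝ, 0 ≤ r →
      gcb Q A r ≤ ENNReal.ofReal (2 ^ (1 - ν) * H / (1 + ν) * r ^ (1 + ν)) := by
  intro r hr
  rw [gcb]
  refine iSup_le fun x => iSup_le fun hx => iSup_le fun y => iSup_le fun hy =>
    iSup_le fun t => iSup_le fun ht => iSup_le fun hLr => ?_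
  refine ENNReal.ofReal_le_ofReal ?_
  obtain ⟨ht0, ht1⟩ := ht
  have hν0 := hν.1
  have hν1 := hν.2
  have hp : (0:ℝ) < 1 + ν := by linarith
  set z := x + t • (y - x) with hz
  have hzQ : z ∈ Q := hQ.add_smul_sub_mem hx hy ⟨ht0.le, ht1.le⟩
  have hyz : y - z = (1 - t) • (y - x) := by rw [hz]; module
  have hxz : x - z = (-t) • (y - x) := by rw [hz]; module
  set L := ‖y - x‖ with hLdef
  have key : t • A y + (1 - t) • A x - A z =
      t • (A y - A z - (A' z) (y - z)) + (1 - t) • (A x - A z - (A' z) (x - z)) := by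
    have h1 : (A' z) (y - z) = (1 - t) • (A' z) (y - x) := by rw [hyz, map_smul]
    have h2 : (A' z) (x - z) = (-t) • (A' z) (y - x) := by rw [hxz, map_smul]
    rw [h1, h2]; module
  have hn1 : ‖y - z‖ = (1 - t) * L := by
    rw [hyz, norm_smul, Real.norm_eq_abs, abs_of_pos (by linarith : (0:ℝ) < 1 - t)]
  have hn2 : ‖x - z‖ = t * L := by
    rw [hxz, norm_smul, Real.norm_eq_abs, abs_neg, abs_of_pos ht0]
  have T1 : ‖A y - A z - (A' z) (y - z)‖ ≤ H / (1 + ν) * ((1 - t) * L) ^ (1 + ν) := by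
    have h := taylor_aux hQ hν hH hA' hHolder hzQ hy
    rwa [hn1] at h
  have T2 : ‖A x - A z - (A' z) (x - z)‖ ≤ H / (1 + ν) * (t * L) ^ (1 + ν) := by
    have h := taylor_aux hQ hν hH hA' hHolder hzQ hx
    rwa [hn2] at h
  have hD : ‖t • A y + (1 - t) • A x - A z‖ ≤
      t * (H / (1 + ν) * ((1 - t) * L) ^ (1 + ν)) +
      (1 - t) * (H / (1 + ν) * (t * L) ^ (1 + ν)) := by
    rw [key]
    refine (norm_add_le _ _).trans ?_
    rw [norm_smul, norm_smul, Real.norm_eq_abs, abs_of_pos ht0, Real.norm_eq_abs,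
      abs_of_pos (by linarith : (0:ℝ) < 1 - t)]
    exact add_le_add (mul_le_mul_of_nonneg_left T1 ht0.le)
      (mul_le_mul_of_nonneg_left T2 (by linarith))
  have hexp : t * (H / (1 + ν) * ((1 - t) * L) ^ (1 + ν)) +
      (1 - t) * (H / (1 + ν) * (t * L) ^ (1 + ν))
      = H / (1 + ν) * (t * (1 - t)) * ((1 - t) ^ ν + t ^ ν) * L ^ (1 + ν) := by
    rw [Real.mul_rpow (by linarith : (0:ℝ) ≤ 1 - t) (norm_nonneg _),
      Real.mul_rpow ht0.le (norm_nonneg _),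
      Real.rpow_add (by linarith : (0:ℝ) < 1 - t), Real.rpow_add ht0]
    simp only [Real.rpow_one]
    ring
  have hsum : (1 - t) ^ ν + t ^ ν ≤ 2 ^ (1 - ν) := by
    have := rpow_add_rpow_le_two_rpow hν0 hν1 ht0.le ht1.le
    linarith
  have hL' : L ^ (1 + ν) ≤ r ^ (1 + ν) :=
    Real.rpow_le_rpow (norm_nonneg _) hLr (by linarith)
  have hAn : 0 ≤ H / (1 + ν) * (t * (1 - t)) :=
    mul_nonneg (div_nonneg hH.le hp.le) (by nlinarith)
  have step1 : H / (1 + ν) * (t * (1 - t)) * ((1 - t) ^ ν + t ^ ν) * L ^ (1 + ν) ≤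
      H / (1 + ν) * (t * (1 - t)) * 2 ^ (1 - ν) * r ^ (1 + ν) := by
    apply mul_le_mul
    · exact mul_le_mul_of_nonneg_left hsum hAn
    · exact hL'
    · exact Real.rpow_nonneg (norm_nonneg _) _
    · exact mul_nonneg hAn (Real.rpow_nonneg (by norm_num) _)
  rw [div_le_iff₀ (mul_pos ht0 (by linarith : (0:ℝ) < 1 - t))]
  calc ‖t • A y + (1 - t) • A x - A z‖
      ≤ t * (H / (1 + ν) * ((1 - t) * L) ^ (1 + ν)) +
        (1 - t) * (H / (1 + ν) * (t * L) ^ (1 + ν)) := hD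
    _ = H / (1 + ν) * (t * (1 - t)) * ((1 - t) ^ ν + t ^ ν) * L ^ (1 + ν) := hexp
    _ ≤ H / (1 + ν) * (t * (1 - t)) * 2 ^ (1 - ν) * r ^ (1 + ν) := step1
    _ = 2 ^ (1 - ν) * H / (1 + ν) * r ^ (1 + ν) * (t * (1 - t)) := by ring
end

section
/- Let E be a finite-dimensional real inner product space, Q ⊆ E an open convex set, p ≥ 1 an integer, and V : Q → E a p-times continuously differentiable map such that κ_{D^{p−1}V}(r) is finite for all relevant r. Define σ̂₀ = κ_V and, for p ≥ 2, σ̂_{p−1}(r) = (1/(p−2)!) ∫₀^r (r−t)^{p−2} κ_{D^{p−1}V}(t) dt. Then for all x, y ∈ Q one has ‖V(y) − T^p_x(y)‖ ≤ σ̂_{p−1}(‖y − x‖). -/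
open Set
set_option linter.unusedSectionVars false
set_option maxHeartbeats 1000000

variable {E : Type*} [NormedAddCommGroup E] [InnerProductSpace ℝ E] [FiniteDimensional ℝ E]

/-- The defining set of the global curvature bound `κ_{D^q V}(r)` of the `q`-th derivative
of `V` on `Q`. -/
def curvSet (Q : Set E) (V : E → E) (q : ℕ) (r : ℝ) : Set ℝ :=
  {v | ∃ x ∈ Q, ∃ y ∈ Q, ∃ t ∈ Ioo (0 : ℝ) 1, ‖y - x‖ ≤ r ∧
    v = ‖t • iteratedFDerivWithin ℝ q V Q y + (1 - t) • iteratedFDerivWithin ℝ q V Q x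
        - iteratedFDerivWithin ℝ q V Q (x + t • (y - x))‖ / (t * (1 - t))}

/-- The global curvature bound `κ_{D^q V}(r)` of the `q`-th derivative of `V` on `Q`. -/
noncomputable def curv (Q : Set E) (V : E → E) (q : ℕ) (r : ℝ) : ℝ :=
  sSup (curvSet Q V q r)

lemma curvSet_nonneg {Q : Set E} {V : E → E} {q : ℕ} {r v : ℝ}
    (hv : v ∈ curvSet Q V q r) : 0 ≤ v := by
  obtain ⟨x, hx, y, hy, t, ht, hyx, rfl⟩ := hv
  have h1 : 0 < t * (1 - t) := mul_pos ht.1 (by linarith [ht.2])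
  positivity

lemma curv_nonneg (Q : Set E) (V : E → E) (q : ℕ) (r : ℝ) : 0 ≤ curv Q V q r :=
  Real.sSup_nonneg fun _ hv => curvSet_nonneg hv

lemma curv_mono {Q : Set E} {V : E → E} {q : ℕ} {r₁ r₂ : ℝ} (h : r₁ ≤ r₂)
    (hb : BddAbove (curvSet Q V q r₂)) : curv Q V q r₁ ≤ curv Q V q r₂ := by
  rcases eq_empty_or_nonempty (curvSet Q V q r₁) with he | hne
  · rw [curv, he, Real.sSup_empty]; exact curv_nonneg ..
  · exact csSup_le_csSup hb hne fun v hv => by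
      obtain ⟨x, hx, y, hy, t, ht, hxy, hveq⟩ := hv
      exact ⟨x, hx, y, hy, t, ht, hxy.trans h, hveq⟩

lemma diffAt_iteratedFDeriv {Q : Set E} (hQo : IsOpen Q) {V : E → E} {p k : ℕ}
    (hV : ContDiffOn ℝ p V Q) (hk : k < p) {z : E} (hz : z ∈ Q) :
    DifferentiableAt ℝ (iteratedFDeriv ℝ k V) z := by
  have h1 : DifferentiableOn ℝ (iteratedFDerivWithin ℝ k V Q) Q :=
    hV.differentiableOn_iteratedFDerivWithin (by exact_mod_cast hk) hQo.uniqueDiffOn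
  have h2 := (h1 z hz).differentiableAt (hQo.mem_nhds hz)
  exact h2.congr_of_eventuallyEq
    (Filter.eventuallyEq_of_mem (hQo.mem_nhds hz)
      fun w hw => (iteratedFDerivWithin_of_isOpen k hQo hw).symm)

lemma hasDerivAt_line {F : Type*} [NormedAddCommGroup F] [NormedSpace ℝ F] {f : E → F}
    {x u : E} {t : ℝ} (hf : DifferentiableAt ℝ f (x + t • u)) :
    HasDerivAt (fun s : ℝ => f (x + s • u)) (fderiv ℝ f (x + t • u) u) t := by
  have h1 : HasDerivAt (fun s : ℝ => x + s • u) u t := by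
    simpa using ((hasDerivAt_id t).smul_const u).const_add x
  simpa [Function.comp_def] using hf.hasFDerivAt.comp_hasDerivAt t h1

lemma hasDerivAt_g {Q : Set E} (hQo : IsOpen Q) {V : E → E} {p k : ℕ}
    (hV : ContDiffOn ℝ p V Q) (hk : k < p) {x u : E} {t : ℝ} (hz : x + t • u ∈ Q) :
    HasDerivAt (fun s : ℝ => iteratedFDeriv ℝ k V (x + s • u) (fun _ => u))
      (iteratedFDeriv ℝ (k + 1) V (x + t • u) (fun _ => u)) t := by
  have hd := diffAt_iteratedFDeriv hQo hV hk hz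
  have h1 : HasDerivAt (fun s : ℝ => iteratedFDeriv ℝ k V (x + s • u))
      (fderiv ℝ (iteratedFDeriv ℝ k V) (x + t • u) u) t := hasDerivAt_line hd
  have h2 := (ContinuousMultilinearMap.apply ℝ (fun _ : Fin k => E) E
      (fun _ => u)).hasFDerivAt.comp_hasDerivAt t h1
  rw [iteratedFDeriv_succ_apply_left]
  simp only [ContinuousMultilinearMap.apply_apply, Function.comp_def] at h2
  exact h2

lemma keyA {Q : Set E} (hQo : IsOpen Q) (hQc : Convex ℝ Q) {V : E → E} {p n : ℕ}
    (hV : ContDiffOn ℝ p V Q) (hn : n < p)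
    (hfin : ∀ r : ℝ, 0 ≤ r → BddAbove (curvSet Q V n r))
    {a b : E} (ha : a ∈ Q) (hb : b ∈ Q) :
    ‖iteratedFDeriv ℝ n V b - iteratedFDeriv ℝ n V a
      - fderiv ℝ (iteratedFDeriv ℝ n V) a (b - a)‖ ≤ curv Q V n ‖b - a‖ := by
  set f := iteratedFDeriv ℝ n V with hfdef
  set v := b - a with hv
  set r := ‖v‖ with hrdef
  have hr : 0 ≤ r := norm_nonneg _
  have hbdd := hfin r hr
  have hK0 : 0 ≤ curv Q V n r := curv_nonneg ..
  have hmem : ∀ t, t ∈ Ioo (0 : ℝ) 1 →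
      ‖f (a + t • v) - f a - t • (f b - f a)‖ ≤ t * (1 - t) * curv Q V n r := by
    intro t ht
    have htQ : a + t • v ∈ Q := by
      have h := hQc ha hb (by linarith [ht.2] : (0:ℝ) ≤ 1 - t) ht.1.le (by ring)
      have he : a + t • v = (1 - t) • a + t • b := by rw [hv]; module
      rw [he]; exact h
    have hW : ∀ z ∈ Q, iteratedFDerivWithin ℝ n V Q z = f z :=
      fun z hz => iteratedFDerivWithin_of_isOpen n hQo hz
    have hmemset : ‖t • f b + (1 - t) • f a - f (a + t • v)‖ / (t * (1 - t))
        ∈ curvSet Q V n r :=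
      ⟨a, ha, b, hb, t, ht, le_refl r, by rw [hW a ha, hW b hb, hW _ htQ]⟩
    have hle := le_csSup hbdd hmemset
    have hpos : 0 < t * (1 - t) := mul_pos ht.1 (by linarith [ht.2])
    rw [div_le_iff₀ hpos] at hle
    calc ‖f (a + t • v) - f a - t • (f b - f a)‖
        = ‖t • f b + (1 - t) • f a - f (a + t • v)‖ := by
          rw [← norm_neg]; congr 1; module
      _ ≤ curv Q V n r * (t * (1 - t)) := hle
      _ = t * (1 - t) * curv Q V n r := by ring
  have hda : DifferentiableAt ℝ f (a + (0 : ℝ) • v) := by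
    simpa using diffAt_iteratedFDeriv hQo hV hn ha
  have hc : HasDerivAt (fun t : ℝ => f (a + t • v)) (fderiv ℝ f a v) 0 := by
    have h := hasDerivAt_line hda
    simpa using h
  have hslope : Filter.Tendsto (fun t : ℝ => t⁻¹ • (f (a + t • v) - f a) - (f b - f a))
      (nhdsWithin 0 (Ioi (0:ℝ))) (nhds (fderiv ℝ f a v - (f b - f a))) := by
    have h1 := hasDerivAt_iff_tendsto_slope.mp hc
    have h2 := h1.mono_left (nhdsWithin_mono 0 (fun z hz => ne_of_gt hz))
    have h3 := h2.sub_const (f b - f a)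
    refine h3.congr (fun t => ?_)
    simp [slope, vsub_eq_sub]
  have htend := hslope.norm
  have hev : ∀ᶠ t in nhdsWithin 0 (Ioi (0:ℝ)),
      ‖t⁻¹ • (f (a + t • v) - f a) - (f b - f a)‖ ≤ curv Q V n r := by
    filter_upwards [Ioo_mem_nhdsGT_of_mem (by norm_num : (0:ℝ) ∈ Ico (0:ℝ) 1)] with t ht
    have h1 := hmem t ht
    have ht0 : (0:ℝ) < t := ht.1
    have he : t⁻¹ • (f (a + t • v) - f a - t • (f b - f a))
        = t⁻¹ • (f (a + t • v) - f a) - (f b - f a) := by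
      rw [smul_sub, smul_smul, inv_mul_cancel₀ ht0.ne', one_smul]
    have hb1 : ‖t⁻¹ • (f (a + t • v) - f a - t • (f b - f a))‖
        ≤ t⁻¹ * (t * (1 - t) * curv Q V n r) := by
      refine le_trans (ContinuousMultilinearMap.opNorm_smul_le _ _) ?_
      rw [Real.norm_eq_abs, abs_of_pos (inv_pos.mpr ht0)]
      exact mul_le_mul_of_nonneg_left h1 (inv_nonneg.mpr ht0.le)
    rw [← he]
    have h3 : t⁻¹ * (t * (1 - t) * curv Q V n r) = (1 - t) * curv Q V n r := by
      field_simp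
    rw [h3] at hb1
    nlinarith [ht.2]
  have hfinal := le_of_tendsto htend hev
  rw [norm_sub_rev] at hfinal
  exact hfinal

lemma iteratedDerivWithin_line {Q : Set E} (hQo : IsOpen Q) {V : E → E} {p : ℕ}
    (hV : ContDiffOn ℝ p V Q) {x u : E} (hline : ∀ t ∈ Icc (0:ℝ) 1, x + t • u ∈ Q)
    {k : ℕ} (hk : k ≤ p) :
    ∀ t ∈ Icc (0:ℝ) 1, iteratedDerivWithin k (fun s => V (x + s • u)) (Icc (0:ℝ) 1) t
      = iteratedFDeriv ℝ k V (x + t • u) (fun _ => u) := by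
  induction k with
  | zero => intro t ht; simp
  | succ k ih =>
    intro t ht
    have hk' : k ≤ p := by omega
    rw [iteratedDerivWithin_succ]
    have heq : EqOn (iteratedDerivWithin k (fun s => V (x + s • u)) (Icc (0:ℝ) 1))
        (fun s => iteratedFDeriv ℝ k V (x + s • u) (fun _ => u)) (Icc (0:ℝ) 1) :=
      fun s hs => ih hk' s hs
    rw [derivWithin_congr heq (heq ht)]
    exact ((hasDerivAt_g hQo hV (by omega) (hline t ht)).hasDerivWithinAt).derivWithin
      (uniqueDiffOn_Icc zero_lt_one t ht)

/-- Taylor-remainder bound via the integral smoothing of the global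
curvature bound: `‖V(y) − T^p_x(y)‖ ≤ σ̂_{p−1}(‖y−x‖)`, where `σ̂₀ = κ_V` and, for
`p ≥ 2`, `σ̂_{p−1}(r) = (1/(p−2)!) ∫₀^r (r−t)^{p−2} κ_{D^{p−1}V}(t) dt`. -/
theorem taylor_remainder_bound
    (Q : Set E) (hQo : IsOpen Q) (hQc : Convex ℝ Q)
    (p : ℕ) (hp : 1 ≤ p) (V : E → E) (hV : ContDiffOn ℝ p V Q)
    (hfin : ∀ r : ℝ, 0 ≤ r → BddAbove (curvSet Q V (p - 1) r))
    (σ : ℝ → ℝ)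
    (hσ₁ : p = 1 → ∀ r : ℝ, σ r = curv Q V 0 r)
    (hσ₂ : 2 ≤ p → ∀ r : ℝ, σ r = (1 / (Nat.factorial (p - 2) : ℝ)) *
      ∫ t in (0 : ℝ)..r, (r - t) ^ (p - 2) * curv Q V (p - 1) t) :
    ∀ x ∈ Q, ∀ y ∈ Q,
      ‖V y - ∑ k ∈ Finset.range (p + 1),
          ((Nat.factorial k : ℝ))⁻¹ • iteratedFDerivWithin ℝ k V Q x (fun _ => y - x)‖
        ≤ σ ‖y - x‖ := by
  intro x hx y hy
  -- trivial case y = x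
  rcases eq_or_ne y x with rfl | hyx
  · have hsum : ∑ k ∈ Finset.range (p + 1),
        ((Nat.factorial k : ℝ))⁻¹ • iteratedFDerivWithin ℝ k V Q y (fun _ => y - y) = V y := by
      have hzero : ∀ k : ℕ, iteratedFDerivWithin ℝ (k+1) V Q y (fun _ => (0:E)) = 0 :=
        fun k => ContinuousMultilinearMap.map_coord_zero _ (0 : Fin (k+1)) rfl
      rw [Finset.sum_range_succ']
      simp [hzero]
    rw [hsum, sub_self, norm_zero, sub_self, norm_zero]
    rcases eq_or_lt_of_le hp with hp1 | hp2
    · rw [hσ₁ hp1.symm 0]; exact curv_nonneg ..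
    · rw [hσ₂ hp2 0, intervalIntegral.integral_same, mul_zero]
  have hrpos : 0 < ‖y - x‖ := by
    rw [norm_pos_iff]; exact sub_ne_zero.mpr hyx
  rcases eq_or_lt_of_le hp with hp1 | hp2
  -- ### case p = 1
  · subst hp1
    rw [hσ₁ rfl]
    have hfin0 : ∀ r : ℝ, 0 ≤ r → BddAbove (curvSet Q V 0 r) := by simpa using hfin
    have hkey := keyA hQo hQc hV (show 0 < 1 by norm_num) hfin0 hx hy
    have hW1 : iteratedFDerivWithin ℝ 1 V Q x (fun _ => y - x)
        = (fderiv ℝ (iteratedFDeriv ℝ 0 V) x (y - x)) (fun _ : Fin 0 => y - x) := by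
      rw [iteratedFDerivWithin_of_isOpen 1 hQo hx, iteratedFDeriv_succ_apply_left]
      exact congrArg _ (Subsingleton.elim _ _)
    have hEq : V y - ∑ k ∈ Finset.range (1 + 1),
          ((Nat.factorial k : ℝ))⁻¹ • iteratedFDerivWithin ℝ k V Q x (fun _ => y - x)
        = (continuousMultilinearCurryFin0 ℝ E E)
            (iteratedFDeriv ℝ 0 V y - iteratedFDeriv ℝ 0 V x
              - fderiv ℝ (iteratedFDeriv ℝ 0 V) x (y - x)) := by
      rw [Finset.sum_range_succ, Finset.sum_range_succ, Finset.sum_range_zero]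
      rw [map_sub, map_sub]
      simp only [continuousMultilinearCurryFin0_apply, iteratedFDeriv_zero_apply,
        iteratedFDerivWithin_zero_apply, Nat.factorial_zero, Nat.factorial_one,
        Nat.cast_one, inv_one, one_smul, zero_add]
      rw [hW1, show (0 : Fin 0 → E) = (fun _ => y - x) from Subsingleton.elim _ _]
      abel
    rw [hEq, LinearIsometryEquiv.norm_map]
    exact hkey
  -- ### case 2 ≤ p
  · obtain ⟨m, rfl⟩ : ∃ m, p = m + 2 := ⟨p - 2, by omega⟩
    have e1 : m + 2 - 1 = m + 1 := by omega
    have e2 : m + 2 - 2 = m := by omega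
    simp only [e1] at hfin
    rw [hσ₂ (by omega)]
    simp only [e1, e2]
    set u := y - x with hu
    set r := ‖u‖ with hrdef
    have hr0 : 0 ≤ r := hrpos.le
    have hline : ∀ t ∈ Icc (0:ℝ) 1, x + t • u ∈ Q := by
      intro t ht
      have h := hQc hx hy (by linarith [ht.2] : (0:ℝ) ≤ 1 - t) ht.1 (by ring)
      have he : x + t • u = (1 - t) • x + t • y := by rw [hu]; module
      rw [he]; exact h
    have hgd : ∀ k, k < m + 2 → ∀ t ∈ Icc (0:ℝ) 1,
        HasDerivAt (fun s : ℝ => iteratedFDeriv ℝ k V (x + s • u) (fun _ => u))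
          (iteratedFDeriv ℝ (k+1) V (x + t • u) (fun _ => u)) t :=
      fun k hk t ht => hasDerivAt_g hQo hV hk (hline t ht)
    have hgW := fun (k : ℕ) (hk : k ≤ m + 2) =>
      iteratedDerivWithin_line hQo hV hline (k := k) hk
    have hGc : ContDiffOn ℝ (m + 2 : ℕ) (fun s : ℝ => V (x + s • u)) (Icc (0:ℝ) 1) := by
      have hlineC : ContDiff ℝ (m + 2 : ℕ) (fun t : ℝ => x + t • u) :=
        contDiff_const.add (contDiff_id.smul contDiff_const)
      exact hV.comp hlineC.contDiffOn hline
    have hGm : ContDiffOn ℝ (m : ℕ) (fun s : ℝ => V (x + s • u)) (Icc (0:ℝ) 1) :=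
      hGc.of_le (by exact_mod_cast Nat.le_add_right m 2)
    -- derivative of the Taylor polynomial in the base point
    have hF' : ∀ t ∈ Ioo (0:ℝ) 1,
        HasDerivAt (fun t' => taylorWithinEval (fun s : ℝ => V (x + s • u)) m (Icc (0:ℝ) 1) t' 1)
          (((m.factorial : ℝ)⁻¹ * (1 - t) ^ m) • iteratedFDeriv ℝ (m+1) V (x + t • u) (fun _ => u)) t := by
      intro t ht
      have hdi : DifferentiableOn ℝ
          (iteratedDerivWithin m (fun s : ℝ => V (x + s • u)) (Icc (0:ℝ) 1)) (Ioo (0:ℝ) 1) := by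
        intro s hs
        have hda := (hgd m (by omega) s (Ioo_subset_Icc_self hs)).differentiableAt
        exact hda.differentiableWithinAt.congr
          (fun τ hτ => hgW m (by omega) τ (Ioo_subset_Icc_self hτ))
          (hgW m (by omega) s (Ioo_subset_Icc_self hs))
      have h := taylorWithinEval_hasDerivAt_Ioo 1 zero_lt_one ht hGm hdi
      rw [hgW (m+1) (by omega) t (Ioo_subset_Icc_self ht)] at h
      exact h
    -- FTC
    have hgcont : ContinuousOn
        (fun t => iteratedFDeriv ℝ (m+1) V (x + t • u) (fun _ => u)) (Icc (0:ℝ) 1) :=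
      fun t ht => ((hgd (m+1) (by omega) t ht).continuousAt).continuousWithinAt
    have hwcont : Continuous (fun t : ℝ => (m.factorial : ℝ)⁻¹ * (1 - t) ^ m) := by continuity
    have hint1 : IntervalIntegrable (fun t : ℝ =>
        ((m.factorial : ℝ)⁻¹ * (1 - t) ^ m) • iteratedFDeriv ℝ (m+1) V (x + t • u) (fun _ => u))
        MeasureTheory.volume 0 1 := by
      apply ContinuousOn.intervalIntegrable
      rw [uIcc_of_le zero_le_one]
      exact hwcont.continuousOn.smul hgcont
    have hcontF : ContinuousOn
        (fun t' => taylorWithinEval (fun s : ℝ => V (x + s • u)) m (Icc (0:ℝ) 1) t' 1)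
        (Icc (0:ℝ) 1) :=
      continuousOn_taylorWithinEval (uniqueDiffOn_Icc zero_lt_one) hGm
    have hFTC := intervalIntegral.integral_eq_sub_of_hasDerivAt_of_le zero_le_one hcontF hF' hint1
    -- endpoints
    have hF1 : taylorWithinEval (fun s : ℝ => V (x + s • u)) m (Icc (0:ℝ) 1) 1 1 = V y := by
      rw [taylorWithinEval_self]
      rw [hu]
      norm_num
    have hF0 : taylorWithinEval (fun s : ℝ => V (x + s • u)) m (Icc (0:ℝ) 1) 0 1
        = ∑ k ∈ Finset.range (m+1), ((k.factorial : ℝ))⁻¹ • iteratedFDeriv ℝ k V x (fun _ => u) := by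
      rw [taylor_within_apply]
      refine Finset.sum_congr rfl fun k hk => ?_
      rw [hgW k (by simp at hk; omega) 0 (by norm_num : (0:ℝ) ∈ Icc (0:ℝ) 1)]
      norm_num
    -- rewrite the target sum
    have hT : ∑ k ∈ Finset.range (m + 2 + 1),
          ((k.factorial : ℝ))⁻¹ • iteratedFDerivWithin ℝ k V Q x (fun _ => u)
        = (∑ k ∈ Finset.range (m+1), ((k.factorial : ℝ))⁻¹ • iteratedFDeriv ℝ k V x (fun _ => u))
          + (((m+1).factorial : ℝ))⁻¹ • iteratedFDeriv ℝ (m+1) V x (fun _ => u)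
          + (((m+2).factorial : ℝ))⁻¹ • iteratedFDeriv ℝ (m+2) V x (fun _ => u) := by
      rw [Finset.sum_range_succ, Finset.sum_range_succ]
      congr 1
      · congr 1
        · exact Finset.sum_congr rfl fun k _ => by
            rw [iteratedFDerivWithin_of_isOpen k hQo hx]
        · rw [iteratedFDerivWithin_of_isOpen (m+1) hQo hx]
      · rw [iteratedFDerivWithin_of_isOpen (m+2) hQo hx]
    -- scalar integrals
    have hIm : ∀ j : ℕ, (∫ t in (0:ℝ)..1, (1 - t) ^ j) = 1 / (j + 1) := by
      intro j
      have h := intervalIntegral.integral_comp_sub_left (a := (0:ℝ)) (b := 1)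
        (fun s => s ^ j) 1
      simp only [sub_zero, sub_self] at h
      rw [h, integral_pow]
      norm_num
    have hfact1 : ((m+1).factorial : ℝ) = ((m:ℝ) + 1) * (m.factorial : ℝ) := by
      rw [Nat.factorial_succ]; push_cast; ring
    have hfact2 : ((m+2).factorial : ℝ) = ((m:ℝ) + 2) * ((m:ℝ) + 1) * (m.factorial : ℝ) := by
      rw [show m + 2 = (m+1)+1 from rfl, Nat.factorial_succ, Nat.factorial_succ]
      push_cast; ring
    have hfne : (m.factorial : ℝ) ≠ 0 := Nat.cast_ne_zero.mpr (Nat.factorial_ne_zero m)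
    have hw1 : (∫ t in (0:ℝ)..1, (m.factorial : ℝ)⁻¹ * (1 - t) ^ m) = (((m+1).factorial : ℝ))⁻¹ := by
      rw [intervalIntegral.integral_const_mul, hIm, hfact1]
      field_simp
    have hw2 : (∫ t in (0:ℝ)..1, ((m.factorial : ℝ)⁻¹ * (1 - t) ^ m) * t) = (((m+2).factorial : ℝ))⁻¹ := by
      have key : ∀ t : ℝ, ((m.factorial : ℝ)⁻¹ * (1 - t) ^ m) * t
          = (m.factorial : ℝ)⁻¹ * ((1 - t) ^ m - (1 - t) ^ (m+1)) := fun t => by ring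
      simp_rw [key]
      rw [intervalIntegral.integral_const_mul,
        intervalIntegral.integral_sub
          (Continuous.intervalIntegrable (by fun_prop : Continuous fun t : ℝ => (1 - t) ^ m) _ _)
          (Continuous.intervalIntegrable (by fun_prop : Continuous fun t : ℝ => (1 - t) ^ (m+1)) _ _),
        hIm, hIm, hfact2]
      have h1 : ((m:ℝ) + 1) ≠ 0 := by positivity
      have h2 : ((m:ℝ) + 1 + 1) ≠ 0 := by positivity
      push_cast
      field_simp
      ring
    have hI2 : (∫ t in (0:ℝ)..1,
          ((m.factorial : ℝ)⁻¹ * (1 - t) ^ m) • iteratedFDeriv ℝ (m+1) V x (fun _ => u))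
        = (((m+1).factorial : ℝ))⁻¹ • iteratedFDeriv ℝ (m+1) V x (fun _ => u) := by
      rw [intervalIntegral.integral_smul_const, hw1]
    have hI3 : (∫ t in (0:ℝ)..1,
          (((m.factorial : ℝ)⁻¹ * (1 - t) ^ m) * t) • iteratedFDeriv ℝ (m+2) V x (fun _ => u))
        = (((m+2).factorial : ℝ))⁻¹ • iteratedFDeriv ℝ (m+2) V x (fun _ => u) := by
      rw [intervalIntegral.integral_smul_const, hw2]
    have hiB : IntervalIntegrable (fun t : ℝ =>
        ((m.factorial : ℝ)⁻¹ * (1-t)^m) • iteratedFDeriv ℝ (m+1) V x (fun _ => u))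
        MeasureTheory.volume 0 1 :=
      Continuous.intervalIntegrable (hwcont.smul continuous_const) _ _
    have hiC : IntervalIntegrable (fun t : ℝ =>
        (((m.factorial : ℝ)⁻¹ * (1-t)^m) * t) • iteratedFDeriv ℝ (m+2) V x (fun _ => u))
        MeasureTheory.volume 0 1 :=
      Continuous.intervalIntegrable ((hwcont.mul continuous_id).smul continuous_const) _ _
    have hsplit : V y - (∑ k ∈ Finset.range (m + 2 + 1),
          ((k.factorial : ℝ))⁻¹ • iteratedFDerivWithin ℝ k V Q x (fun _ => u))
        = ∫ t in (0:ℝ)..1, ((m.factorial : ℝ)⁻¹ * (1 - t) ^ m) •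
            (iteratedFDeriv ℝ (m+1) V (x + t • u) (fun _ => u)
              - iteratedFDeriv ℝ (m+1) V x (fun _ => u)
              - t • iteratedFDeriv ℝ (m+2) V x (fun _ => u)) := by
      have hsm : ∀ t : ℝ, ((m.factorial : ℝ)⁻¹ * (1 - t) ^ m) •
            (iteratedFDeriv ℝ (m+1) V (x + t • u) (fun _ => u)
              - iteratedFDeriv ℝ (m+1) V x (fun _ => u)
              - t • iteratedFDeriv ℝ (m+2) V x (fun _ => u))
          = ((m.factorial : ℝ)⁻¹ * (1 - t) ^ m) • iteratedFDeriv ℝ (m+1) V (x + t • u) (fun _ => u)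
            - ((m.factorial : ℝ)⁻¹ * (1 - t) ^ m) • iteratedFDeriv ℝ (m+1) V x (fun _ => u)
            - (((m.factorial : ℝ)⁻¹ * (1 - t) ^ m) * t) • iteratedFDeriv ℝ (m+2) V x (fun _ => u) := by
        intro t; rw [smul_sub, smul_sub, smul_smul]
      simp_rw [hsm]
      rw [intervalIntegral.integral_sub (hint1.sub hiB) hiC,
        intervalIntegral.integral_sub hint1 hiB, hI2, hI3, hFTC, hF1, hF0, hT]
      abel
    rw [hsplit]
    -- pointwise bound
    have hψ : ∀ t ∈ Icc (0:ℝ) 1,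
        ‖iteratedFDeriv ℝ (m+1) V (x + t • u) (fun _ => u)
          - iteratedFDeriv ℝ (m+1) V x (fun _ => u)
          - t • iteratedFDeriv ℝ (m+2) V x (fun _ => u)‖
          ≤ curv Q V (m+1) (t * r) * r ^ (m+1) := by
      intro t ht
      have hz : x + t • u ∈ Q := hline t ht
      have hM := keyA hQo hQc hV (show m+1 < m+2 by omega) hfin hx hz
      rw [add_sub_cancel_left] at hM
      have hnr : ‖t • u‖ = t * r := by
        rw [norm_smul, Real.norm_eq_abs, abs_of_nonneg ht.1]
      rw [hnr] at hM
      have happ : iteratedFDeriv ℝ (m+1) V (x + t • u) (fun _ => u)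
            - iteratedFDeriv ℝ (m+1) V x (fun _ => u)
            - t • iteratedFDeriv ℝ (m+2) V x (fun _ => u)
          = (iteratedFDeriv ℝ (m+1) V (x + t • u) - iteratedFDeriv ℝ (m+1) V x
              - fderiv ℝ (iteratedFDeriv ℝ (m+1) V) x (t • u)) (fun _ => u) := by
        rw [ContinuousMultilinearMap.sub_apply, ContinuousMultilinearMap.sub_apply]
        congr 1
        rw [map_smul, ContinuousMultilinearMap.smul_apply]
        congr 1
      rw [happ]
      calc ‖(iteratedFDeriv ℝ (m+1) V (x + t • u) - iteratedFDeriv ℝ (m+1) V x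
              - fderiv ℝ (iteratedFDeriv ℝ (m+1) V) x (t • u)) (fun _ => u)‖
          ≤ ‖iteratedFDeriv ℝ (m+1) V (x + t • u) - iteratedFDeriv ℝ (m+1) V x
              - fderiv ℝ (iteratedFDeriv ℝ (m+1) V) x (t • u)‖ * ∏ _i : Fin (m+1), ‖u‖ :=
            ContinuousMultilinearMap.le_opNorm _ _
        _ = ‖iteratedFDeriv ℝ (m+1) V (x + t • u) - iteratedFDeriv ℝ (m+1) V x
              - fderiv ℝ (iteratedFDeriv ℝ (m+1) V) x (t • u)‖ * r ^ (m+1) := by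
            rw [Finset.prod_const, Finset.card_univ, Fintype.card_fin]
        _ ≤ curv Q V (m+1) (t * r) * r ^ (m+1) :=
            mul_le_mul_of_nonneg_right hM (pow_nonneg hr0 _)
    -- integrability of the bound
    have hκmono : MonotoneOn (fun t : ℝ => curv Q V (m+1) (t * r)) (uIcc (0:ℝ) 1) := by
      rw [uIcc_of_le zero_le_one]
      intro s hs t ht hst
      exact curv_mono (mul_le_mul_of_nonneg_right hst hr0)
        (hfin (t * r) (mul_nonneg ht.1 hr0))
    have hκint : IntervalIntegrable (fun t : ℝ => curv Q V (m+1) (t * r))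
        MeasureTheory.volume 0 1 := hκmono.intervalIntegrable
    have hBint : IntervalIntegrable (fun t : ℝ =>
        ((m.factorial : ℝ)⁻¹ * (1-t)^m * r^(m+1)) * curv Q V (m+1) (t*r)) MeasureTheory.volume 0 1 := by
      apply IntervalIntegrable.continuousOn_mul hκint
      exact (hwcont.mul continuous_const).continuousOn
    have hψc : ContinuousOn (fun t : ℝ => ((m.factorial : ℝ)⁻¹ * (1 - t) ^ m) •
        (iteratedFDeriv ℝ (m+1) V (x + t • u) (fun _ => u)
          - iteratedFDeriv ℝ (m+1) V x (fun _ => u)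
          - t • iteratedFDeriv ℝ (m+2) V x (fun _ => u))) (Icc (0:ℝ) 1) :=
      hwcont.continuousOn.smul ((hgcont.sub continuousOn_const).sub
        ((continuous_id.smul continuous_const).continuousOn))
    calc ‖∫ t in (0:ℝ)..1, ((m.factorial : ℝ)⁻¹ * (1 - t) ^ m) •
            (iteratedFDeriv ℝ (m+1) V (x + t • u) (fun _ => u)
              - iteratedFDeriv ℝ (m+1) V x (fun _ => u)
              - t • iteratedFDeriv ℝ (m+2) V x (fun _ => u))‖
        ≤ ∫ t in (0:ℝ)..1, ‖((m.factorial : ℝ)⁻¹ * (1 - t) ^ m) •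
            (iteratedFDeriv ℝ (m+1) V (x + t • u) (fun _ => u)
              - iteratedFDeriv ℝ (m+1) V x (fun _ => u)
              - t • iteratedFDeriv ℝ (m+2) V x (fun _ => u))‖ :=
          intervalIntegral.norm_integral_le_integral_norm zero_le_one
      _ ≤ ∫ t in (0:ℝ)..1, ((m.factorial : ℝ)⁻¹ * (1-t)^m * r^(m+1)) * curv Q V (m+1) (t*r) := by
          apply intervalIntegral.integral_mono_on zero_le_one
            (ContinuousOn.intervalIntegrable (by rw [uIcc_of_le zero_le_one]; exact hψc.norm))
            hBint
          intro t ht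
          have hw0 : (0:ℝ) ≤ (m.factorial : ℝ)⁻¹ * (1 - t) ^ m := by
            have h1t : (0:ℝ) ≤ 1 - t := by linarith [ht.2]
            exact mul_nonneg (by positivity) (pow_nonneg h1t m)
          rw [norm_smul, Real.norm_eq_abs, abs_of_nonneg hw0]
          calc ((m.factorial : ℝ)⁻¹ * (1 - t) ^ m) * ‖iteratedFDeriv ℝ (m+1) V (x + t • u) (fun _ => u)
              - iteratedFDeriv ℝ (m+1) V x (fun _ => u)
              - t • iteratedFDeriv ℝ (m+2) V x (fun _ => u)‖
              ≤ ((m.factorial : ℝ)⁻¹ * (1 - t) ^ m) * (curv Q V (m+1) (t * r) * r ^ (m+1)) :=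
                mul_le_mul_of_nonneg_left (hψ t ht) hw0
            _ = ((m.factorial : ℝ)⁻¹ * (1-t)^m * r^(m+1)) * curv Q V (m+1) (t*r) := by ring
      _ = 1 / (m.factorial : ℝ) * ∫ t in (0:ℝ)..r, (r - t) ^ m * curv Q V (m+1) t := by
          have hcomp := intervalIntegral.integral_comp_mul_right (a := (0:ℝ)) (b := 1)
            (fun s => (r - s)^m * curv Q V (m+1) s) (ne_of_gt hrpos)
          rw [zero_mul, one_mul] at hcomp
          have hBrw : ∀ t : ℝ, ((m.factorial : ℝ)⁻¹ * (1-t)^m * r^(m+1)) * curv Q V (m+1) (t*r)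
              = ((m.factorial : ℝ)⁻¹ * r) * ((r - t*r)^m * curv Q V (m+1) (t*r)) := by
            intro t
            have hpw : (r - t*r)^m = (1-t)^m * r^m := by rw [← mul_pow]; ring_nf
            rw [hpw]; ring
          simp_rw [hBrw]
          rw [intervalIntegral.integral_const_mul, hcomp, smul_eq_mul]
          field_simp
end

section
/- Let q ≥ 1 be an integer and κ : [0, R) → [0, ∞) (R ∈ (0, ∞]) a nondecreasing function with κ(0) = 0 satisfying κ(β r) ≥ β² κ(r) for all β ∈ [0, 1] and r ∈ [0, R). Then for all r ∈ [0, R): σ̂_q(r) ≤ r·τ_q(r) ≤ (q + 2)·σ̂_q(r). -/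
open scoped ENNReal

/-- The integral smoothing `σ̂_q` of a curvature bound `κ` (with the convention
`σ̂₀ = κ`): for `q ≥ 1`, `σ̂_q(r) = (1/(q−1)!) ∫₀^r (r−t)^{q−1} κ(t) dt`. -/
noncomputable def sigmaHat (q : ℕ) (κ : ℝ → ℝ) (r : ℝ) : ℝ :=
  if q = 0 then κ r
  else (1 / (Nat.factorial (q - 1) : ℝ)) * ∫ t in (0 : ℝ)..r, (r - t) ^ (q - 1) * κ t

/-- The derivative `τ_q = σ̂_q′`: `τ₁ = κ` and, for `q ≥ 2`,
`τ_q(r) = (1/(q−2)!) ∫₀^r (r−t)^{q−2} κ(t) dt`. -/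
noncomputable def tauHat (q : ℕ) (κ : ℝ → ℝ) (r : ℝ) : ℝ :=
  if q ≤ 1 then κ r
  else (1 / (Nat.factorial (q - 2) : ℝ)) * ∫ t in (0 : ℝ)..r, (r - t) ^ (q - 2) * κ t

open MeasureTheory Set intervalIntegral

namespace SigmaHatAux

variable {κ : ℝ → ℝ}

lemma kernel_integrable (hmono : Monotone κ) (p : ℕ) (s a b : ℝ) :
    IntervalIntegrable (fun t => (s - t) ^ p * κ t) volume a b :=
  (hmono.intervalIntegrable).continuousOn_mul
    (Continuous.continuousOn (by continuity))

/-- Fubini identity. -/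
lemma A_fubini (hmono : Monotone κ) (hnn : ∀ x, 0 ≤ κ x) (p : ℕ) {r : ℝ} (hr : 0 ≤ r) :
    ∫ t in (0:ℝ)..r, (r - t) ^ (p + 1) * κ t
      = ((p : ℝ) + 1) * ∫ s in (0:ℝ)..r, ∫ t in (0:ℝ)..s, (s - t) ^ p * κ t := by
  set μ := volume.restrict (Ioc (0:ℝ) r) with hμ
  have hμfin : IsFiniteMeasure μ := by
    constructor
    rw [hμ, Measure.restrict_apply_univ]
    exact measure_Ioc_lt_top
  set g : ℝ → ℝ → ℝ := fun s t => if t ≤ s then (s - t) ^ p * κ t else 0 with hg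
  have hmeas : Measurable (Function.uncurry g) := by
    have h : Function.uncurry g = fun z : ℝ × ℝ =>
        Set.indicator {z : ℝ × ℝ | z.2 ≤ z.1} (fun z => (z.1 - z.2) ^ p * κ z.2) z := by
      ext z
      simp [Function.uncurry, Set.indicator, hg]
    rw [h]
    exact Measurable.indicator
      (((continuous_fst.sub continuous_snd).pow p).measurable.mul
        (hmono.measurable.comp measurable_snd))
      (isClosed_le continuous_snd continuous_fst).measurableSet
  have hint : Integrable (Function.uncurry g) (μ.prod μ) := by
    refine ⟨hmeas.aestronglyMeasurable, ?_⟩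
    apply HasFiniteIntegral.of_bounded (C := r ^ p * κ r)
    rw [hμ, Measure.prod_restrict]
    refine (ae_restrict_iff' (measurableSet_Ioc.prod measurableSet_Ioc)).2 (ae_of_all _ ?_)
    rintro ⟨s, t⟩ ⟨hs, ht⟩
    simp only [Function.uncurry, hg]
    split_ifs with h
    · rw [Real.norm_eq_abs, abs_of_nonneg (mul_nonneg
        (pow_nonneg (by linarith [ht.1] : (0:ℝ) ≤ s - t) p) (hnn t))]
      exact mul_le_mul (pow_le_pow_left₀ (by linarith [ht.1]) (by linarith [ht.1, hs.2]) p)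
        (hmono ht.2) (hnn t) (pow_nonneg hr p)
    · simpa using mul_nonneg (pow_nonneg hr p) (hnn r)
  have hswap := MeasureTheory.integral_integral_swap hint
  have hL : ∀ s ∈ Ioc (0:ℝ) r, (∫ t, g s t ∂μ) = ∫ t in (0:ℝ)..s, (s - t) ^ p * κ t := by
    intro s hs
    have h2 : (fun t => g s t) = Set.indicator (Iic s) (fun t => (s - t) ^ p * κ t) := by
      ext t
      simp [hg, Set.indicator_apply]
    have h3 : Ioc (0:ℝ) r ∩ Iic s = Ioc 0 s := by
      rw [Set.Ioc_inter_Iic, min_eq_right hs.2]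
    rw [show (∫ t, g s t ∂μ) = ∫ t in Ioc (0:ℝ) r, g s t from rfl, h2,
      MeasureTheory.setIntegral_indicator measurableSet_Iic, h3,
      ← intervalIntegral.integral_of_le hs.1.le]
  have hR : ∀ t ∈ Ioc (0:ℝ) r,
      (∫ s, g s t ∂μ) = (r - t) ^ (p + 1) * κ t / ((p : ℝ) + 1) := by
    intro t ht
    have h2 : (fun s => g s t) = Set.indicator (Ici t) (fun s => (s - t) ^ p * κ t) := by
      ext s
      simp [hg, Set.indicator_apply]
    have h3 : Ioc (0:ℝ) r ∩ Ici t = Icc t r := by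
      ext s
      simp only [Set.mem_inter_iff, Set.mem_Ioc, Set.mem_Ici, Set.mem_Icc]
      constructor
      · rintro ⟨⟨_, h⟩, h'⟩; exact ⟨h', h⟩
      · rintro ⟨h1, h2⟩; exact ⟨⟨lt_of_lt_of_le ht.1 h1, h2⟩, h1⟩
    rw [show (∫ s, g s t ∂μ) = ∫ s in Ioc (0:ℝ) r, g s t from rfl, h2,
      MeasureTheory.setIntegral_indicator measurableSet_Ici, h3,
      MeasureTheory.integral_Icc_eq_integral_Ioc, ← intervalIntegral.integral_of_le ht.2,
      intervalIntegral.integral_mul_const,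
      intervalIntegral.integral_comp_sub_right (fun u => u ^ p) t, sub_self,
      integral_pow]
    have hp : ((p : ℝ) + 1) ≠ 0 := by positivity
    rw [zero_pow (by omega : p + 1 ≠ 0)]
    push_cast
    field_simp
    ring
  have hL2 : (∫ s, ∫ t, g s t ∂μ ∂μ)
      = ∫ s in (0:ℝ)..r, ∫ t in (0:ℝ)..s, (s - t) ^ p * κ t := by
    rw [intervalIntegral.integral_of_le hr]
    exact MeasureTheory.setIntegral_congr_fun measurableSet_Ioc hL
  have hR2 : (∫ t, ∫ s, g s t ∂μ ∂μ)
      = ∫ t in (0:ℝ)..r, (r - t) ^ (p + 1) * κ t / ((p : ℝ) + 1) := by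
    rw [intervalIntegral.integral_of_le hr]
    exact MeasureTheory.setIntegral_congr_fun measurableSet_Ioc hR
  have hdiv : (∫ t in (0:ℝ)..r, (r - t) ^ (p + 1) * κ t / ((p : ℝ) + 1))
      = (∫ t in (0:ℝ)..r, (r - t) ^ (p + 1) * κ t) / ((p : ℝ) + 1) :=
    intervalIntegral.integral_div _ _
  have hp : ((p : ℝ) + 1) ≠ 0 := by positivity
  rw [hL2, hR2, hdiv] at hswap
  field_simp at hswap ⊢
  linarith [hswap]


lemma A_nonneg (hnn : ∀ x, 0 ≤ κ x) (p : ℕ) {s : ℝ} (hs : 0 ≤ s) :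
    0 ≤ ∫ t in (0:ℝ)..s, (s - t) ^ p * κ t :=
  intervalIntegral.integral_nonneg hs fun t ht =>
    mul_nonneg (pow_nonneg (sub_nonneg.2 ht.2) p) (hnn t)

lemma A_mono (hmono : Monotone κ) (hnn : ∀ x, 0 ≤ κ x) (p : ℕ) :
    MonotoneOn (fun s => ∫ t in (0:ℝ)..s, (s - t) ^ p * κ t) (Ici 0) := by
  intro s hs s' hs' hss
  simp only
  calc ∫ t in (0:ℝ)..s, (s - t) ^ p * κ t
      ≤ ∫ t in (0:ℝ)..s, (s' - t) ^ p * κ t := by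
        refine intervalIntegral.integral_mono_on hs (kernel_integrable hmono p _ _ _)
          (kernel_integrable hmono p _ _ _) fun t ht => ?_
        exact mul_le_mul_of_nonneg_right
          (pow_le_pow_left₀ (sub_nonneg.2 ht.2) (by linarith) p) (hnn t)
    _ ≤ ∫ t in (0:ℝ)..s', (s' - t) ^ p * κ t := by
        refine intervalIntegral.integral_mono_interval le_rfl hs hss
          ((ae_restrict_iff' measurableSet_Ioc).2 (ae_of_all _ fun t ht => ?_))
          (kernel_integrable hmono p _ _ _)
        exact mul_nonneg (pow_nonneg (sub_nonneg.2 ht.2) p) (hnn t)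

/-- growth under scaling. -/
lemma A_growth (hmono : Monotone κ) (hnn : ∀ x, 0 ≤ κ x) {r : ℝ} (hr : 0 ≤ r)
    (hgrowth : ∀ β ∈ Icc (0:ℝ) 1, ∀ s ∈ Icc 0 r, β ^ 2 * κ s ≤ κ (β * s))
    (p : ℕ) {β : ℝ} (hβ : β ∈ Icc (0:ℝ) 1) :
    β ^ (p + 3) * ∫ t in (0:ℝ)..r, (r - t) ^ p * κ t
      ≤ ∫ t in (0:ℝ)..(β * r), (β * r - t) ^ p * κ t := by
  rcases eq_or_lt_of_le hβ.1 with hβ0 | hβ0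
  · rw [← hβ0]
    simp only [zero_mul, intervalIntegral.integral_same]
    rw [zero_pow (by omega : p + 3 ≠ 0), zero_mul]
  · have hsub : ∫ t in (0:ℝ)..(β * r), (β * r - t) ^ p * κ t
        = β • ∫ u in (0:ℝ)..r, (β * r - β * u) ^ p * κ (β * u) := by
      rw [intervalIntegral.smul_integral_comp_mul_left (fun t => (β * r - t) ^ p * κ t) β,
        mul_zero]
    rw [hsub]
    have hsimp : ∀ u : ℝ, (β * r - β * u) ^ p * κ (β * u)
        = β ^ p * ((r - u) ^ p * κ (β * u)) := by
      intro u
      rw [show β * r - β * u = β * (r - u) by ring, mul_pow]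
      ring
    simp only [hsimp, smul_eq_mul]
    rw [intervalIntegral.integral_const_mul]
    have hmono' : Monotone fun u => κ (β * u) :=
      fun a b hab => hmono (by nlinarith [hβ.1] : β * a ≤ β * b)
    have hge : ∫ u in (0:ℝ)..r, (r - u) ^ p * (β ^ 2 * κ u)
        ≤ ∫ u in (0:ℝ)..r, (r - u) ^ p * κ (β * u) := by
      refine intervalIntegral.integral_mono_on hr ?_ ?_ fun u hu => ?_
      · have : (fun u => (r - u) ^ p * (β ^ 2 * κ u))
            = fun u => β ^ 2 * ((r - u) ^ p * κ u) := by ext u; ring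
        rw [this]
        exact (kernel_integrable hmono p r 0 r).const_mul _
      · exact (hmono'.intervalIntegrable).continuousOn_mul
          (Continuous.continuousOn (by continuity))
      · exact mul_le_mul_of_nonneg_left (hgrowth β hβ u hu)
          (pow_nonneg (sub_nonneg.2 hu.2) p)
    have heq : ∫ u in (0:ℝ)..r, (r - u) ^ p * (β ^ 2 * κ u)
        = β ^ 2 * ∫ u in (0:ℝ)..r, (r - u) ^ p * κ u := by
      rw [← intervalIntegral.integral_const_mul]
      congr 1; ext u; ring
    rw [heq] at hge
    calc β ^ (p + 3) * ∫ t in (0:ℝ)..r, (r - t) ^ p * κ t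
        = β * (β ^ p * (β ^ 2 * ∫ u in (0:ℝ)..r, (r - u) ^ p * κ u)) := by ring
      _ ≤ β * (β ^ p * ∫ u in (0:ℝ)..r, (r - u) ^ p * κ (β * u)) := by
          have hβp : 0 ≤ β ^ p := pow_nonneg hβ.1 p
          have := mul_le_mul_of_nonneg_left hge hβp
          nlinarith [hβ.1]

end SigmaHatAux

open SigmaHatAux

set_option maxHeartbeats 1000000 in
/-- Under the growth property of `κ`, the compatibility inequalities
`σ̂_q(r) ≤ r·τ_q(r) ≤ (q+2)·σ̂_q(r)` hold. -/
theorem sigmaHat_compat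
    (R : ℝ≥0∞) (hR : 0 < R) (q : ℕ) (hq : 1 ≤ q) (κ : ℝ → ℝ)
    (hκ_nonneg : ∀ r : ℝ, 0 ≤ r → ENNReal.ofReal r < R → 0 ≤ κ r)
    (hκ_mono : ∀ r s : ℝ, 0 ≤ r → r ≤ s → ENNReal.ofReal s < R → κ r ≤ κ s)
    (hκ_zero : κ 0 = 0)
    (hκ_growth : ∀ β ∈ Set.Icc (0 : ℝ) 1, ∀ r : ℝ, 0 ≤ r → ENNReal.ofReal r < R →
      β ^ 2 * κ r ≤ κ (β * r)) :
    ∀ r : ℝ, 0 ≤ r → ENNReal.ofReal r < R →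
      sigmaHat q κ r ≤ r * tauHat q κ r ∧
      r * tauHat q κ r ≤ ((q : ℝ) + 2) * sigmaHat q κ r := by
  intro r hr hrR
  rcases eq_or_lt_of_le hr with hr0 | hr
  · -- r = 0
    subst hr0
    have hσ : sigmaHat q κ 0 = 0 := by
      rw [sigmaHat, if_neg (by omega : ¬ q = 0)]
      simp
    have hτ : (0:ℝ) * tauHat q κ 0 = 0 := zero_mul _
    rw [hσ, hτ]
    norm_num
  -- r > 0 from here on
  have hltR : ∀ x : ℝ, x ≤ r → ENNReal.ofReal x < R := fun x hx =>
    lt_of_le_of_lt (ENNReal.ofReal_le_ofReal hx) hrR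
  set κ' : ℝ → ℝ := fun t => κ (min (max t 0) r) with hκ'def
  have hc0 : ∀ t : ℝ, 0 ≤ min (max t 0) r := fun t => le_min (le_max_right t 0) hr.le
  have hcr : ∀ t : ℝ, min (max t 0) r ≤ r := fun t => min_le_right _ _
  have hmono' : Monotone κ' := by
    intro a b hab
    exact hκ_mono _ _ (hc0 a) (min_le_min (max_le_max hab le_rfl) le_rfl) (hltR _ (hcr b))
  have hnn' : ∀ x, 0 ≤ κ' x := fun x => hκ_nonneg _ (hc0 x) (hltR _ (hcr x))
  have heq : ∀ t ∈ Icc (0:ℝ) r, κ' t = κ t := by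
    intro t ht
    have : min (max t 0) r = t := by
      rw [max_eq_left ht.1, min_eq_left ht.2]
    rw [hκ'def]
    simp only [this]
  have hgrow' : ∀ β ∈ Icc (0:ℝ) 1, ∀ s ∈ Icc (0:ℝ) r, β ^ 2 * κ' s ≤ κ' (β * s) := by
    intro β hβ s hs
    rw [heq s hs, heq (β * s) ⟨mul_nonneg hβ.1 hs.1, by nlinarith [hβ.2, hs.1, hs.2]⟩]
    exact hκ_growth β hβ s hs.1 (hltR s hs.2)
  have hIcongr : ∀ m : ℕ, (∫ t in (0:ℝ)..r, (r - t) ^ m * κ t)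
      = ∫ t in (0:ℝ)..r, (r - t) ^ m * κ' t := by
    intro m
    apply intervalIntegral.integral_congr
    intro t ht
    rw [uIcc_of_le hr.le] at ht
    show (r - t) ^ m * κ t = (r - t) ^ m * κ' t
    rw [heq t ht]
  clear_value κ'
  clear hκ'def hc0 hcr
  obtain rfl | ⟨k, rfl⟩ : q = 1 ∨ ∃ k, q = k + 2 := by
    rcases q with _ | _ | q
    · omega
    · exact Or.inl rfl
    · exact Or.inr ⟨q, rfl⟩
  · -- q = 1
    have hσ : sigmaHat 1 κ r = ∫ t in (0:ℝ)..r, κ' t := by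
      rw [sigmaHat, if_neg one_ne_zero]
      have e : ∀ t : ℝ, (r - t) ^ (1 - 1) * κ t = κ t := fun t => by norm_num
      simp only [e]
      rw [show (1:ℕ) - 1 = 0 from rfl, Nat.factorial_zero]
      norm_num
      apply intervalIntegral.integral_congr
      intro t ht
      rw [uIcc_of_le hr.le] at ht
      rw [heq t ht]
    have hτ : tauHat 1 κ r = κ' r := by
      rw [tauHat, if_pos le_rfl, heq r ⟨hr.le, le_rfl⟩]
    rw [hσ, hτ]
    constructor
    · -- ∫ κ' ≤ r * κ' r
      have h1 : (∫ t in (0:ℝ)..r, κ' t) ≤ ∫ _t in (0:ℝ)..r, κ' r :=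
        intervalIntegral.integral_mono_on hr.le hmono'.intervalIntegrable
          intervalIntegrable_const (fun t ht => hmono' ht.2)
      simpa using h1
    · -- r * κ' r ≤ 3 * ∫ κ'
      have hpt : ∀ t ∈ Icc (0:ℝ) r, (t / r) ^ 2 * κ' r ≤ κ' t := by
        intro t ht
        have hβ : t / r ∈ Icc (0:ℝ) 1 :=
          ⟨div_nonneg ht.1 hr.le, (div_le_one hr).2 ht.2⟩
        have := hgrow' (t / r) hβ r ⟨hr.le, le_rfl⟩
        rwa [div_mul_cancel₀ t hr.ne'] at this
      have hlow : (∫ t in (0:ℝ)..r, (t / r) ^ 2 * κ' r) ≤ ∫ t in (0:ℝ)..r, κ' t := by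
        refine intervalIntegral.integral_mono_on hr.le ?_ hmono'.intervalIntegrable hpt
        exact (Continuous.intervalIntegrable (by continuity) _ _)
      have hcalc : (∫ t in (0:ℝ)..r, (t / r) ^ 2 * κ' r) = r * κ' r / 3 := by
        have e : (fun t : ℝ => (t / r) ^ 2 * κ' r) = fun t : ℝ => t ^ 2 * (κ' r / r ^ 2) := by
          ext t
          field_simp
        rw [e, intervalIntegral.integral_mul_const, integral_pow]
        field_simp
        ring
      rw [hcalc] at hlow
      push_cast
      linarith
  · -- q = k + 2
    have hk1 : (k : ℕ) + 2 - 1 = k + 1 := rfl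
    have hk2 : (k : ℕ) + 2 - 2 = k := rfl
    have hσ : sigmaHat (k + 2) κ r
        = (1 / ((k + 1).factorial : ℝ)) * ∫ t in (0:ℝ)..r, (r - t) ^ (k + 1) * κ' t := by
      rw [sigmaHat, if_neg (by omega : ¬ k + 2 = 0), hk1, hIcongr]
    have hτ : tauHat (k + 2) κ r
        = (1 / (k.factorial : ℝ)) * ∫ t in (0:ℝ)..r, (r - t) ^ k * κ' t := by
      rw [tauHat, if_neg (by omega : ¬ k + 2 ≤ 1), hk2, hIcongr]
    set Ik : ℝ := ∫ t in (0:ℝ)..r, (r - t) ^ k * κ' t with hIk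
    set Ik1 : ℝ := ∫ t in (0:ℝ)..r, (r - t) ^ (k + 1) * κ' t with hIk1
    have hIknn : 0 ≤ Ik := A_nonneg hnn' k hr.le
    have hIk1nn : 0 ≤ Ik1 := A_nonneg hnn' (k + 1) hr.le
    have hF : (0:ℝ) < k.factorial := by exact_mod_cast k.factorial_pos
    have hF1 : (k.factorial : ℝ) ≤ (k + 1).factorial := by
      exact_mod_cast Nat.factorial_le (by omega)
    have hF1' : ((k + 1).factorial : ℝ) = ((k:ℝ) + 1) * k.factorial := by
      rw [Nat.factorial_succ]
      push_cast
      ring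
    clear_value Ik Ik1
    rw [hσ, hτ]
    constructor
    · -- first inequality
      have hstep : Ik1 ≤ r * Ik := by
        have h1 : Ik1 ≤ ∫ t in (0:ℝ)..r, r * ((r - t) ^ k * κ' t) := by
          rw [hIk1]
          refine intervalIntegral.integral_mono_on hr.le
            (kernel_integrable hmono' (k + 1) r 0 r)
            ((kernel_integrable hmono' k r 0 r).const_mul r) fun t ht => ?_
          have h1 : (0:ℝ) ≤ (r - t) ^ k := pow_nonneg (by linarith [ht.2]) k
          have h2 : r - t ≤ r := by linarith [ht.1]
          have h3 := hnn' t
          rw [pow_succ]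
          nlinarith [mul_le_mul_of_nonneg_left h2 (mul_nonneg h1 h3)]
        rw [intervalIntegral.integral_const_mul, ← hIk] at h1
        exact h1
      calc (1 / ((k + 1).factorial : ℝ)) * Ik1
          ≤ (1 / ((k + 1).factorial : ℝ)) * (r * Ik) :=
            mul_le_mul_of_nonneg_left hstep (by positivity)
        _ ≤ (1 / (k.factorial : ℝ)) * (r * Ik) :=
            mul_le_mul_of_nonneg_right (one_div_le_one_div_of_le hF hF1)
              (mul_nonneg hr.le hIknn)
        _ = r * ((1 / (k.factorial : ℝ)) * Ik) := by ring
    · -- second inequality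
      have hfub := A_fubini hmono' hnn' k hr.le
      rw [← hIk1] at hfub
      have hgrowI : ∀ s ∈ Icc (0:ℝ) r,
          (s / r) ^ (k + 3) * Ik ≤ ∫ t in (0:ℝ)..s, (s - t) ^ k * κ' t := by
        intro s hs
        have hβ : s / r ∈ Icc (0:ℝ) 1 := ⟨div_nonneg hs.1 hr.le, (div_le_one hr).2 hs.2⟩
        have := A_growth hmono' hnn' hr.le hgrow' k hβ
        rwa [div_mul_cancel₀ s hr.ne', ← hIk] at this
      have hlow : (∫ s in (0:ℝ)..r, (s / r) ^ (k + 3) * Ik)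
          ≤ ∫ s in (0:ℝ)..r, ∫ t in (0:ℝ)..s, (s - t) ^ k * κ' t := by
        refine intervalIntegral.integral_mono_on hr.le
          ((((continuous_id.div_const r).pow (k + 3)).mul continuous_const).intervalIntegrable _ _)
          ?_ hgrowI
        refine MonotoneOn.intervalIntegrable ?_
        refine (A_mono hmono' hnn' k).mono ?_
        rw [uIcc_of_le hr.le]
        exact Icc_subset_Ici_self
      have hcalc : (∫ s in (0:ℝ)..r, (s / r) ^ (k + 3) * Ik)
          = r / ((k:ℝ) + 4) * Ik := by
        have e : (fun s : ℝ => (s / r) ^ (k + 3) * Ik)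
            = fun s : ℝ => s ^ (k + 3) * (Ik / r ^ (k + 3)) := by
          ext s
          field_simp
          rw [div_pow, div_mul_eq_mul_div, div_mul_cancel₀ _ (pow_ne_zero _ hr.ne')]
          ring
        rw [e, intervalIntegral.integral_mul_const, integral_pow]
        rw [zero_pow (by omega : k + 3 + 1 ≠ 0)]
        push_cast
        rw [show r ^ (k + 3 + 1) = r * r ^ (k + 3) by ring]
        field_simp
        ring
      rw [hcalc] at hlow
      have key : ((k:ℝ) + 1) * (r * Ik) ≤ ((k:ℝ) + 4) * Ik1 := by
        have h4 : (0:ℝ) < (k:ℝ) + 4 := by positivity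
        have := mul_le_mul_of_nonneg_left hlow (by positivity : (0:ℝ) ≤ (k:ℝ) + 1)
        rw [← hfub] at this
        have hexp : ((k:ℝ) + 1) * (r / ((k:ℝ) + 4) * Ik) = ((k:ℝ) + 1) * (r * Ik) / ((k:ℝ) + 4) := by
          ring
        rw [hexp] at this
        calc ((k:ℝ) + 1) * (r * Ik) = ((k:ℝ) + 1) * (r * Ik) / ((k:ℝ) + 4) * ((k:ℝ) + 4) := by
              field_simp
          _ ≤ Ik1 * ((k:ℝ) + 4) := mul_le_mul_of_nonneg_right this h4.le
          _ = ((k:ℝ) + 4) * Ik1 := by ring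
      have hcast : ((k + 2 : ℕ) : ℝ) + 2 = (k:ℝ) + 4 := by push_cast; ring
      rw [hcast, hF1']
      rw [show r * (1 / (k.factorial : ℝ) * Ik) = r * Ik / (k.factorial : ℝ) by ring,
        show ((k:ℝ) + 4) * (1 / (((k:ℝ) + 1) * (k.factorial : ℝ)) * Ik1)
          = ((k:ℝ) + 4) * Ik1 / (((k:ℝ) + 1) * (k.factorial : ℝ)) by ring]
      rw [div_le_div_iff₀ hF (by positivity)]
      nlinarith [mul_le_mul_of_nonneg_right key hF.le]
end

section
/- Let q ≥ 0 be an integer and κ : [0, R) → [0, ∞) (R ∈ (0, ∞]) a nondecreasing function with κ(0) = 0 satisfying κ(β r) ≥ β² κ(r) for all β ∈ [0, 1] and r ∈ [0, R). With the convention σ̂₀ = κ, the functions L_q(r) = σ̂_q(r) / r^{q+2} and L̄_{q+1}(r) = τ_{q+1}(r) / r^{q+2} are nonincreasing on (0, R). -/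
open scoped ENNReal

private lemma kappa_comp_int (R : ℝ≥0∞) (κ : ℝ → ℝ)
    (hκ_mono : ∀ r s : ℝ, 0 ≤ r → r ≤ s → ENNReal.ofReal s < R → κ r ≤ κ s)
    {s : ℝ} (hs0 : 0 ≤ s) (hs : ENNReal.ofReal s < R) {β : ℝ} (hβ0 : 0 ≤ β) (hβ1 : β ≤ 1) :
    IntervalIntegrable (fun u => κ (β * u)) MeasureTheory.volume 0 s := by
  apply MonotoneOn.intervalIntegrable
  rw [Set.uIcc_of_le hs0]
  intro a ha b hb hab
  refine hκ_mono (β * a) (β * b) (mul_nonneg hβ0 ha.1)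
    (mul_le_mul_of_nonneg_left hab hβ0)
    (lt_of_le_of_lt (ENNReal.ofReal_le_ofReal ?_) hs)
  nlinarith [hb.1, hb.2]

private lemma key (R : ℝ≥0∞) (q : ℕ) (κ : ℝ → ℝ)
    (hκ_mono : ∀ r s : ℝ, 0 ≤ r → r ≤ s → ENNReal.ofReal s < R → κ r ≤ κ s)
    (hκ_growth : ∀ β ∈ Set.Icc (0 : ℝ) 1, ∀ r : ℝ, 0 ≤ r → ENNReal.ofReal r < R →
      β ^ 2 * κ r ≤ κ (β * r))
    {r s : ℝ} (hr : 0 < r) (hrs : r ≤ s) (hs : ENNReal.ofReal s < R) :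
    sigmaHat q κ s / s ^ (q + 2) ≤ sigmaHat q κ r / r ^ (q + 2) := by
  have hs0 : 0 < s := lt_of_lt_of_le hr hrs
  set β := r / s with hβ
  have hβ0 : 0 < β := div_pos hr hs0
  have hβ1 : β ≤ 1 := div_le_one_of_le₀ hrs hs0.le
  have hβs : β * s = r := div_mul_cancel₀ r hs0.ne'
  cases q with
  | zero =>
      simp only [sigmaHat, if_pos rfl, if_true]
      rw [div_le_div_iff₀ (by positivity) (by positivity)]
      have hg := hκ_growth β ⟨hβ0.le, hβ1⟩ s hs0.le hs
      rw [hβs] at hg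
      have hβ2 : β ^ 2 * s ^ 2 = r ^ 2 := by rw [← mul_pow, hβs]
      have h3 : κ s * r ^ 2 = β ^ 2 * κ s * s ^ 2 := by rw [← hβ2]; ring
      have h4 := mul_le_mul_of_nonneg_right hg (sq_nonneg s)
      show κ s * r ^ 2 ≤ κ r * s ^ 2
      linarith
  | succ n =>
      have hsig : ∀ x : ℝ, sigmaHat (n + 1) κ x
          = (1 / (Nat.factorial n : ℝ)) * ∫ t in (0:ℝ)..x, (x - t) ^ n * κ t := by
        intro x; simp [sigmaHat]
      -- integrability
      have hκint : IntervalIntegrable κ MeasureTheory.volume 0 s := by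
        have h := kappa_comp_int R κ hκ_mono hs0.le hs (β := 1) zero_le_one le_rfl
        simpa using h
      have hcont : ∀ x : ℝ, ContinuousOn (fun u : ℝ => (x - u) ^ n) (Set.uIcc 0 s) := by
        intro x; fun_prop
      have hint1 : IntervalIntegrable (fun u => (s - u) ^ n * (β ^ 2 * κ u))
          MeasureTheory.volume 0 s :=
        ((hκint.const_mul (β ^ 2)).continuousOn_mul (hcont s))
      have hint2 : IntervalIntegrable (fun u => (s - u) ^ n * κ (β * u))
          MeasureTheory.volume 0 s :=
        ((kappa_comp_int R κ hκ_mono hs0.le hs hβ0.le hβ1).continuousOn_mul (hcont s))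
      -- substitution
      have hsub : (∫ t in (0:ℝ)..r, (r - t) ^ n * κ t)
          = β ^ (n + 1) * ∫ u in (0:ℝ)..s, (s - u) ^ n * κ (β * u) := by
        have h1 : (β • ∫ u in (0:ℝ)..s, (fun t => (r - t) ^ n * κ t) (β * u))
            = ∫ t in (β * 0)..(β * s), (r - t) ^ n * κ t :=
          intervalIntegral.smul_integral_comp_mul_left (fun t => (r - t) ^ n * κ t) β
        rw [mul_zero, hβs] at h1
        rw [← h1, smul_eq_mul]
        have h2 : ∀ u : ℝ, (r - β * u) ^ n * κ (β * u)
            = β ^ n * ((s - u) ^ n * κ (β * u)) := by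
          intro u
          have hru : r - β * u = β * (s - u) := by rw [← hβs]; ring
          rw [hru, mul_pow]; ring
        simp only [h2, intervalIntegral.integral_const_mul]
        ring
      -- pointwise comparison
      have hmono : (∫ u in (0:ℝ)..s, (s - u) ^ n * (β ^ 2 * κ u))
          ≤ ∫ u in (0:ℝ)..s, (s - u) ^ n * κ (β * u) := by
        apply intervalIntegral.integral_mono_on hs0.le hint1 hint2
        intro x hx
        have hg := hκ_growth β ⟨hβ0.le, hβ1⟩ x hx.1
          (lt_of_le_of_lt (ENNReal.ofReal_le_ofReal hx.2) hs)
        exact mul_le_mul_of_nonneg_left hg (pow_nonneg (by linarith [hx.2]) n)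
      have hIs : (∫ u in (0:ℝ)..s, (s - u) ^ n * (β ^ 2 * κ u))
          = β ^ 2 * ∫ u in (0:ℝ)..s, (s - u) ^ n * κ u := by
        rw [← intervalIntegral.integral_const_mul]
        congr 1; funext u; ring
      -- combine
      have hI : β ^ (n + 3) * (∫ t in (0:ℝ)..s, (s - t) ^ n * κ t)
          ≤ ∫ t in (0:ℝ)..r, (r - t) ^ n * κ t := by
        rw [hsub]
        calc β ^ (n + 3) * (∫ t in (0:ℝ)..s, (s - t) ^ n * κ t)
            = β ^ (n + 1) * (β ^ 2 * ∫ t in (0:ℝ)..s, (s - t) ^ n * κ t) := by ring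
          _ = β ^ (n + 1) * ∫ u in (0:ℝ)..s, (s - u) ^ n * (β ^ 2 * κ u) := by rw [hIs]
          _ ≤ β ^ (n + 1) * ∫ u in (0:ℝ)..s, (s - u) ^ n * κ (β * u) := by
              exact mul_le_mul_of_nonneg_left hmono (by positivity)
      have hσ : β ^ (n + 3) * sigmaHat (n + 1) κ s ≤ sigmaHat (n + 1) κ r := by
        rw [hsig s, hsig r]
        have hc : (0:ℝ) ≤ 1 / (Nat.factorial n : ℝ) := by positivity
        calc β ^ (n + 3) * ((1 / (Nat.factorial n : ℝ)) * ∫ t in (0:ℝ)..s, (s - t) ^ n * κ t)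
            = (1 / (Nat.factorial n : ℝ)) * (β ^ (n + 3) * ∫ t in (0:ℝ)..s, (s - t) ^ n * κ t) := by ring
          _ ≤ (1 / (Nat.factorial n : ℝ)) * ∫ t in (0:ℝ)..r, (r - t) ^ n * κ t :=
              mul_le_mul_of_nonneg_left hI hc
      rw [div_le_div_iff₀ (by positivity) (by positivity)]
      have hpow : β ^ (n + 1 + 2) * s ^ (n + 1 + 2) = r ^ (n + 1 + 2) := by
        rw [← mul_pow, hβs]
      calc sigmaHat (n + 1) κ s * r ^ (n + 1 + 2)
          = (β ^ (n + 3) * sigmaHat (n + 1) κ s) * s ^ (n + 1 + 2) := by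
            rw [← hpow]; ring
        _ ≤ sigmaHat (n + 1) κ r * s ^ (n + 1 + 2) :=
            mul_le_mul_of_nonneg_right hσ (by positivity)

/-- Under the growth property of `κ`, the functions
`L_q(r) = σ̂_q(r)/r^{q+2}` and `L̄_{q+1}(r) = τ_{q+1}(r)/r^{q+2}` are nonincreasing
on `(0, R)`. -/
theorem ratio_antitone
    (R : ℝ≥0∞) (hR : 0 < R) (q : ℕ) (κ : ℝ → ℝ)
    (hκ_nonneg : ∀ r : ℝ, 0 ≤ r → ENNReal.ofReal r < R → 0 ≤ κ r)
    (hκ_mono : ∀ r s : ℝ, 0 ≤ r → r ≤ s → ENNReal.ofReal s < R → κ r ≤ κ s)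
    (hκ_zero : κ 0 = 0)
    (hκ_growth : ∀ β ∈ Set.Icc (0 : ℝ) 1, ∀ r : ℝ, 0 ≤ r → ENNReal.ofReal r < R →
      β ^ 2 * κ r ≤ κ (β * r)) :
    AntitoneOn (fun r => sigmaHat q κ r / r ^ (q + 2))
      {r : ℝ | 0 < r ∧ ENNReal.ofReal r < R} ∧
    AntitoneOn (fun r => tauHat (q + 1) κ r / r ^ (q + 2))
      {r : ℝ | 0 < r ∧ ENNReal.ofReal r < R} := by
  have first : AntitoneOn (fun r => sigmaHat q κ r / r ^ (q + 2))
      {r : ℝ | 0 < r ∧ ENNReal.ofReal r < R} := by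
    intro a ha b hb hab
    exact key R q κ hκ_mono hκ_growth ha.1 hab hb.2
  refine ⟨first, ?_⟩
  have heq : ∀ x : ℝ, tauHat (q + 1) κ x = sigmaHat q κ x := by
    intro x; cases q <;> simp [tauHat, sigmaHat]
  simpa only [heq] using first
end

section
/- Let q ≥ 1 be an integer and κ : [0, R) → [0, ∞) (R ∈ (0, ∞]) a nondecreasing function with κ(0) = 0 satisfying κ(β r) ≥ β² κ(r) for all β ∈ [0, 1] and r ∈ [0, R). Then for all r ∈ [0, R) and s ∈ (0, R): τ_q(r) ≤ τ_q(s) + (τ_q(s) / s^{q+1}) · r^{q+1}. -/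
open scoped ENNReal

/-- Integrability of the scaled curvature function on `[0,s]`. -/
lemma kappa_scaled_intervalIntegrable {R : ℝ≥0∞} {κ : ℝ → ℝ}
    (hκ_mono : ∀ r s : ℝ, 0 ≤ r → r ≤ s → ENNReal.ofReal s < R → κ r ≤ κ s)
    {c s : ℝ} (hc : 0 ≤ c) (hs : 0 ≤ s) (hcs : ENNReal.ofReal (c * s) < R) :
    IntervalIntegrable (fun u => κ (c * u)) MeasureTheory.volume 0 s := by
  apply MonotoneOn.intervalIntegrable
  rw [Set.uIcc_of_le hs]
  intro x hx y hy hxy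
  exact hκ_mono _ _ (mul_nonneg hc hx.1) (by nlinarith [hx.1, hy.2])
    (lt_of_le_of_lt (ENNReal.ofReal_le_ofReal (by nlinarith [hy.2])) hcs)

/-- Nonnegativity of `τ_q` on `[0,R)`. -/
lemma tauHat_nonneg {R : ℝ≥0∞} (q : ℕ) (κ : ℝ → ℝ)
    (hκ_nonneg : ∀ r : ℝ, 0 ≤ r → ENNReal.ofReal r < R → 0 ≤ κ r)
    {s : ℝ} (hs : 0 ≤ s) (hsR : ENNReal.ofReal s < R) : 0 ≤ tauHat q κ s := by
  unfold tauHat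
  split
  · exact hκ_nonneg s hs hsR
  · apply mul_nonneg (by positivity)
    apply intervalIntegral.integral_nonneg hs
    intro u hu
    exact mul_nonneg (pow_nonneg (by linarith [hu.2]) _)
      (hκ_nonneg u hu.1 (lt_of_le_of_lt (ENNReal.ofReal_le_ofReal hu.2) hsR))

/-- Scaling estimate: if `κ((r/s)·u) ≤ K·κ(u)` on `[0,s]`, then
`τ_q(r) ≤ (r/s)^{q-1}·K·τ_q(s)`. -/
lemma tauHat_scale {R : ℝ≥0∞} (q : ℕ) (hq : 1 ≤ q) (κ : ℝ → ℝ)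
    (hκ_nonneg : ∀ r : ℝ, 0 ≤ r → ENNReal.ofReal r < R → 0 ≤ κ r)
    (hκ_mono : ∀ r s : ℝ, 0 ≤ r → r ≤ s → ENNReal.ofReal s < R → κ r ≤ κ s)
    {r s : ℝ} (hr : 0 ≤ r) (hrR : ENNReal.ofReal r < R) (hs : 0 < s)
    (hsR : ENNReal.ofReal s < R) {K : ℝ} (hK : 0 ≤ K)
    (hκK : ∀ u ∈ Set.Icc (0 : ℝ) s, κ ((r / s) * u) ≤ K * κ u) :
    tauHat q κ r ≤ (r / s) ^ (q - 1) * K * tauHat q κ s := by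
  set c : ℝ := r / s with hc_def
  have hc : 0 ≤ c := div_nonneg hr hs.le
  have hcs : c * s = r := div_mul_cancel₀ r hs.ne'
  by_cases hq1 : q ≤ 1
  · -- q = 1 : tauHat = κ
    have h1 : q - 1 = 0 := by omega
    simp only [tauHat, if_pos hq1, h1, pow_zero, one_mul]
    have := hκK s ⟨hs.le, le_refl s⟩
    rwa [hcs] at this
  · -- q ≥ 2
    have hq2 : 2 ≤ q := by omega
    simp only [tauHat, if_neg hq1]
    set C : ℝ := 1 / (Nat.factorial (q - 2) : ℝ) with hC_def
    have hC : 0 ≤ C := by positivity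
    rcases eq_or_lt_of_le hr with hr0 | hr0
    · -- r = 0
      rw [← hr0]
      have : c = 0 := by rw [hc_def, ← hr0]; simp
      rw [this, zero_pow (by omega : q - 1 ≠ 0)]
      simp only [intervalIntegral.integral_same, mul_zero, zero_mul]
      exact le_refl 0
    · have hcpos : 0 < c := div_pos hr0 hs
      -- change of variables t = c * u
      have hcov : (∫ u in (0:ℝ)..s, (r - c * u) ^ (q - 2) * κ (c * u))
          = c⁻¹ * ∫ t in (0:ℝ)..r, (r - t) ^ (q - 2) * κ t := by
        have := intervalIntegral.integral_comp_mul_left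
          (fun t => (r - t) ^ (q - 2) * κ t) hcpos.ne' (a := 0) (b := s)
        rw [this, mul_zero, hcs, smul_eq_mul]
      have hint : (∫ t in (0:ℝ)..r, (r - t) ^ (q - 2) * κ t)
          = c * ∫ u in (0:ℝ)..s, (r - c * u) ^ (q - 2) * κ (c * u) := by
        rw [hcov, ← mul_assoc, mul_inv_cancel₀ hcpos.ne', one_mul]
      -- rewrite the integrand using r - c*u = c*(s-u)
      have hintegrand : ∀ u : ℝ, (r - c * u) ^ (q - 2) * κ (c * u)
          = c ^ (q - 2) * ((s - u) ^ (q - 2) * κ (c * u)) := by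
        intro u
        have : r - c * u = c * (s - u) := by rw [← hcs]; ring
        rw [this, mul_pow, mul_assoc]
      have hint2 : (∫ u in (0:ℝ)..s, (r - c * u) ^ (q - 2) * κ (c * u))
          = c ^ (q - 2) * ∫ u in (0:ℝ)..s, (s - u) ^ (q - 2) * κ (c * u) := by
        simp_rw [hintegrand]
        exact intervalIntegral.integral_const_mul _ _
      -- integrability facts
      have hκc_int : IntervalIntegrable (fun u => κ (c * u)) MeasureTheory.volume 0 s :=
        kappa_scaled_intervalIntegrable hκ_mono hc hs.le (by rw [hcs]; exact hrR)
      have hκ_int : IntervalIntegrable κ MeasureTheory.volume 0 s := by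
        have := kappa_scaled_intervalIntegrable hκ_mono
          (show (0:ℝ) ≤ 1 by norm_num) hs.le (by rw [one_mul]; exact hsR)
        simpa using this
      have hcont : ContinuousOn (fun u : ℝ => (s - u) ^ (q - 2)) (Set.uIcc 0 s) :=
        (continuous_const.sub continuous_id).pow _ |>.continuousOn
      have hint_left : IntervalIntegrable (fun u => (s - u) ^ (q - 2) * κ (c * u))
          MeasureTheory.volume 0 s := hκc_int.continuousOn_mul hcont
      have hint_right : IntervalIntegrable (fun u => (s - u) ^ (q - 2) * (K * κ u))
          MeasureTheory.volume 0 s := (hκ_int.const_mul K).continuousOn_mul hcont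
      -- pointwise comparison
      have hmono : (∫ u in (0:ℝ)..s, (s - u) ^ (q - 2) * κ (c * u))
          ≤ ∫ u in (0:ℝ)..s, (s - u) ^ (q - 2) * (K * κ u) := by
        apply intervalIntegral.integral_mono_on hs.le hint_left hint_right
        intro u hu
        exact mul_le_mul_of_nonneg_left (hκK u hu) (pow_nonneg (by linarith [hu.2]) _)
      have hKout : (∫ u in (0:ℝ)..s, (s - u) ^ (q - 2) * (K * κ u))
          = K * ∫ u in (0:ℝ)..s, (s - u) ^ (q - 2) * κ u := by
        rw [← intervalIntegral.integral_const_mul]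
        congr 1; funext u; ring
      -- nonnegativity of the target integral
      have hI_nonneg : 0 ≤ ∫ u in (0:ℝ)..s, (s - u) ^ (q - 2) * κ u := by
        apply intervalIntegral.integral_nonneg hs.le
        intro u hu
        exact mul_nonneg (pow_nonneg (by linarith [hu.2]) _)
          (hκ_nonneg u hu.1 (lt_of_le_of_lt (ENNReal.ofReal_le_ofReal hu.2) hsR))
      -- assemble
      rw [hint, hint2]
      have hpow : c * c ^ (q - 2) = c ^ (q - 1) := by
        rw [← pow_succ']
        congr 1
        omega
      calc C * (c * (c ^ (q - 2) * ∫ u in (0:ℝ)..s, (s - u) ^ (q - 2) * κ (c * u)))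
          = c ^ (q - 1) * (C * ∫ u in (0:ℝ)..s, (s - u) ^ (q - 2) * κ (c * u)) := by
            rw [← hpow]; ring
        _ ≤ c ^ (q - 1) * (C * (K * ∫ u in (0:ℝ)..s, (s - u) ^ (q - 2) * κ u)) := by
            apply mul_le_mul_of_nonneg_left _ (pow_nonneg hc _)
            apply mul_le_mul_of_nonneg_left _ hC
            rw [← hKout]; exact hmono
        _ = c ^ (q - 1) * K * (C * ∫ u in (0:ℝ)..s, (s - u) ^ (q - 2) * κ u) := by ring

/-- Under the growth property of `κ`, the two-point bound
`τ_q(r) ≤ τ_q(s) + (τ_q(s)/s^{q+1})·r^{q+1}` holds for all `r ∈ [0,R)`, `s ∈ (0,R)`. -/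
theorem tauHat_two_point_bound
    (R : ℝ≥0∞) (hR : 0 < R) (q : ℕ) (hq : 1 ≤ q) (κ : ℝ → ℝ)
    (hκ_nonneg : ∀ r : ℝ, 0 ≤ r → ENNReal.ofReal r < R → 0 ≤ κ r)
    (hκ_mono : ∀ r s : ℝ, 0 ≤ r → r ≤ s → ENNReal.ofReal s < R → κ r ≤ κ s)
    (hκ_zero : κ 0 = 0)
    (hκ_growth : ∀ β ∈ Set.Icc (0 : ℝ) 1, ∀ r : ℝ, 0 ≤ r → ENNReal.ofReal r < R →
      β ^ 2 * κ r ≤ κ (β * r)) :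
    ∀ r : ℝ, 0 ≤ r → ENNReal.ofReal r < R → ∀ s : ℝ, 0 < s → ENNReal.ofReal s < R →
      tauHat q κ r ≤ tauHat q κ s + (tauHat q κ s / s ^ (q + 1)) * r ^ (q + 1) := by
  intro r hr hrR s hs hsR
  have hτs : 0 ≤ tauHat q κ s := tauHat_nonneg q κ hκ_nonneg hs.le hsR
  have hterm : 0 ≤ tauHat q κ s / s ^ (q + 1) * r ^ (q + 1) :=
    mul_nonneg (div_nonneg hτs (pow_nonneg hs.le _)) (pow_nonneg hr _)
  rcases le_or_gt r s with hrs | hrs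
  · -- r ≤ s: use monotonicity, K = 1
    have hc1 : r / s ≤ 1 := (div_le_one hs).mpr hrs
    have hκK : ∀ u ∈ Set.Icc (0 : ℝ) s, κ ((r / s) * u) ≤ 1 * κ u := by
      intro u hu
      rw [one_mul]
      apply hκ_mono _ _ (mul_nonneg (div_nonneg hr hs.le) hu.1)
        (by nlinarith [hu.1, hu.2, div_nonneg hr hs.le])
        (lt_of_le_of_lt (ENNReal.ofReal_le_ofReal hu.2) hsR)
    have h1 := tauHat_scale q hq κ hκ_nonneg hκ_mono hr hrR hs hsR zero_le_one hκK
    have h2 : (r / s) ^ (q - 1) * 1 * tauHat q κ s ≤ tauHat q κ s := by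
      rw [mul_one]
      nlinarith [pow_le_one₀ (div_nonneg hr hs.le) hc1 (n := q - 1), hτs,
        pow_nonneg (div_nonneg hr hs.le) (q - 1)]
    linarith
  · -- s < r: use the growth property, K = (r/s)^2
    have hrpos : 0 < r := hs.trans hrs
    have hcpos : 0 < r / s := div_pos hrpos hs
    have hc1 : 1 ≤ r / s := (one_le_div hs).mpr hrs.le
    have hκK : ∀ u ∈ Set.Icc (0 : ℝ) s, κ ((r / s) * u) ≤ (r / s) ^ 2 * κ u := by
      intro u hu
      have hβ : s / r ∈ Set.Icc (0 : ℝ) 1 :=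
        ⟨div_nonneg hs.le hrpos.le, (div_le_one hrpos).mpr hrs.le⟩
      have hcu_nonneg : 0 ≤ (r / s) * u := mul_nonneg hcpos.le hu.1
      have hcu_le : (r / s) * u ≤ r := by
        rw [div_mul_eq_mul_div, div_le_iff₀ hs]
        nlinarith [hu.2, hrpos]
      have hcuR : ENNReal.ofReal ((r / s) * u) < R :=
        lt_of_le_of_lt (ENNReal.ofReal_le_ofReal hcu_le) hrR
      have hgr := hκ_growth (s / r) hβ ((r / s) * u) hcu_nonneg hcuR
      have heq : (s / r) * ((r / s) * u) = u := by
        field_simp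
      rw [heq] at hgr
      -- (s/r)^2 * κ((r/s)*u) ≤ κ u  ⟹  κ((r/s)*u) ≤ (r/s)^2 * κ u
      have hsr2 : (0:ℝ) < (s / r) ^ 2 := by positivity
      rw [← mul_le_mul_iff_of_pos_left hsr2]
      calc (s / r) ^ 2 * κ ((r / s) * u) ≤ κ u := hgr
        _ = (s / r) ^ 2 * ((r / s) ^ 2 * κ u) := by
            rw [← mul_assoc, ← mul_pow]
            field_simp
    have h1 := tauHat_scale q hq κ hκ_nonneg hκ_mono hr hrR hs hsR
      (K := (r / s) ^ 2) (by positivity) hκK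
    have hpow : (r / s) ^ (q - 1) * (r / s) ^ 2 = (r / s) ^ (q + 1) := by
      rw [← pow_add]
      congr 1
      omega
    have h2 : (r / s) ^ (q - 1) * (r / s) ^ 2 * tauHat q κ s
        = tauHat q κ s / s ^ (q + 1) * r ^ (q + 1) := by
      rw [hpow, div_pow]
      field_simp
    rw [h2] at h1
    linarith
end

section
/- Let E be a real inner product space, p ≥ 1 an integer, δ > 0, M > 0, and σ̂ : [0, ∞) → [0, ∞) a nondecreasing function such that σ̂( (2δ/(5M))^{1/(p+1)} ) ≤ δ/5. Set α = M^{1/(p+1)} (2δ/5)^{p/(p+1)}. Suppose u, g ∈ E with r = ‖u‖ satisfy ‖g + (α + M r^p)·u‖ ≤ σ̂(r) and ‖g‖ ≥ δ. Then r ≥ (2δ/(5M))^{1/(p+1)}. -/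
open scoped RealInnerProductSpace

/-- In the doubly regularized subproblem step, if the regularization
parameter `M` is large enough (`σ̂((2δ/(5M))^{1/(p+1)}) ≤ δ/5`), `α` is chosen as
`M^{1/(p+1)} (2δ/5)^{p/(p+1)}`, and the reduced operator `g` satisfies the
Taylor-remainder bound `‖g + (α + M r^p)·u‖ ≤ σ̂(r)` with `‖g‖ ≥ δ`, then
`r = ‖u‖ ≥ (2δ/(5M))^{1/(p+1)}`. -/
theorem radius_lower_bound
    {E : Type*} [NormedAddCommGroup E] [InnerProductSpace ℝ E]
    (p : ℕ) (hp : 1 ≤ p) (δ M : ℝ) (hδ : 0 < δ) (hM : 0 < M)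
    (σ : ℝ → ℝ) (hσ_nonneg : ∀ r, 0 ≤ r → 0 ≤ σ r)
    (hσ_mono : MonotoneOn σ (Set.Ici (0 : ℝ)))
    (hσ_small : σ ((2 * δ / (5 * M)) ^ ((1 : ℝ) / ((p : ℝ) + 1))) ≤ δ / 5)
    (α : ℝ) (hα : α = M ^ ((1 : ℝ) / ((p : ℝ) + 1)) * (2 * δ / 5) ^ ((p : ℝ) / ((p : ℝ) + 1)))
    (u g : E) (r : ℝ) (hr : r = ‖u‖)
    (hres : ‖g + (α + M * r ^ p) • u‖ ≤ σ r)
    (hg : δ ≤ ‖g‖) :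
    (2 * δ / (5 * M)) ^ ((1 : ℝ) / ((p : ℝ) + 1)) ≤ r := by
  by_contra hcon
  push_neg at hcon
  set R : ℝ := (2 * δ / (5 * M)) ^ ((1 : ℝ) / ((p : ℝ) + 1)) with hR
  have hc : (0:ℝ) < 2 * δ / (5 * M) := by positivity
  have hnp : (0:ℝ) < (p:ℝ) + 1 := by positivity
  have hRpos : 0 < R := Real.rpow_pos_of_pos hc _
  have hr0 : 0 ≤ r := hr ▸ norm_nonneg u
  -- R^(p+1) = 2δ/(5M)
  have hRpow : R ^ (p + 1) = 2 * δ / (5 * M) := by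
    rw [hR, ← Real.rpow_natCast _ (p+1), ← Real.rpow_mul hc.le]
    push_cast
    rw [one_div, inv_mul_cancel₀ hnp.ne', Real.rpow_one]
  -- α * R = 2δ/5
  have hd5 : (0:ℝ) < 2 * δ / 5 := by positivity
  have hαR : α * R = 2 * δ / 5 := by
    have hrw : 2 * δ / (5 * M) = (2 * δ / 5) / M := by ring
    have key : (2*δ/5) ^ ((p:ℝ)/((p:ℝ)+1)) * (2*δ/5) ^ ((1:ℝ)/((p:ℝ)+1)) = 2*δ/5 := by
      rw [← Real.rpow_add hd5, ← add_div, div_self hnp.ne', Real.rpow_one]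
    have hM1 : M ^ ((1:ℝ)/((p:ℝ)+1)) ≠ 0 := (Real.rpow_pos_of_pos hM _).ne'
    rw [hα, hR, hrw, Real.div_rpow hd5.le hM.le]
    calc M ^ ((1:ℝ)/((p:ℝ)+1)) * (2*δ/5) ^ ((p:ℝ)/((p:ℝ)+1)) *
          ((2*δ/5) ^ ((1:ℝ)/((p:ℝ)+1)) / M ^ ((1:ℝ)/((p:ℝ)+1)))
        = (2*δ/5) ^ ((p:ℝ)/((p:ℝ)+1)) * (2*δ/5) ^ ((1:ℝ)/((p:ℝ)+1)) *
          (M ^ ((1:ℝ)/((p:ℝ)+1)) / M ^ ((1:ℝ)/((p:ℝ)+1))) := by ring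
      _ = 2*δ/5 := by rw [div_self hM1, mul_one, key]
  have hα0 : 0 < α := by rw [hα]; positivity
  -- bound ‖g‖
  have hs0 : 0 ≤ α + M * r ^ p := by positivity
  have h1 : ‖g‖ ≤ σ r + (α + M * r ^ p) * r := by
    have h0 := norm_sub_le (g + (α + M * r ^ p) • u) ((α + M * r ^ p) • u)
    simp only [add_sub_cancel_right] at h0
    have h2 : ‖(α + M * r ^ p) • u‖ = (α + M * r ^ p) * r := by
      rw [norm_smul, Real.norm_of_nonneg hs0, hr]
    linarith [hres, h0, h2.le, h2.ge]
  have hσr : σ r ≤ δ / 5 :=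
    le_trans (hσ_mono (Set.mem_Ici.2 hr0) (Set.mem_Ici.2 hRpos.le) hcon.le) hσ_small
  have hαr : α * r < 2 * δ / 5 := by
    calc α * r < α * R := by exact mul_lt_mul_of_pos_left hcon hα0
    _ = 2 * δ / 5 := hαR
  have hMr : M * r ^ p * r ≤ 2 * δ / 5 := by
    have : r ^ p * r = r ^ (p + 1) := by ring
    have hle : r ^ (p+1) ≤ R ^ (p+1) := pow_le_pow_left₀ hr0 hcon.le _
    calc M * r ^ p * r = M * r ^ (p+1) := by ring
    _ ≤ M * R ^ (p+1) := by nlinarith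
    _ = 2 * δ / 5 := by rw [hRpow]; field_simp
  nlinarith [hσr, hαr, hMr, h1, hg]
end

section
/- Let E be a real inner product space, p ≥ 1 an integer, δ > 0, M > 0, and σ̂ : [0, ∞) → [0, ∞) a nondecreasing function such that σ̂( (2δ/(5M))^{1/(p+1)} ) ≤ δ/5 and such that r ↦ σ̂(r)/r^{p+1} is nonincreasing on (0, ∞). Set α = M^{1/(p+1)} (2δ/5)^{p/(p+1)}. Suppose u, g ∈ E with r = ‖u‖ satisfy ‖g + (α + M r^p)·u‖ ≤ σ̂(r) and ‖g‖ ≥ δ. Then ⟨g, −u⟩ ≥ c_p · ( ‖g‖^{p+2} / M )^{1/(p+1)}, where c_p = (1/4)·(3/2)^{p/(2(p+1))} · [ ((p+2)/p)^{p/(2(p+1))} + (p/(p+2))^{(p+2)/(2(p+1))} ]; moreover c_p ≥ 1/3. -/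
open scoped RealInnerProductSpace

lemma rpow_inv_le' {x y : ℝ} (hx : 0 ≤ x) (hy : 0 ≤ y) (n : ℕ) (hn : n ≠ 0)
    (h : x ≤ y ^ n) : x ^ ((1 : ℝ)/(n : ℝ)) ≤ y := by
  have h1 : x ^ ((1:ℝ)/(n:ℝ)) ≤ (y ^ n) ^ ((1:ℝ)/(n:ℝ)) :=
    Real.rpow_le_rpow hx h (by positivity)
  calc x ^ ((1:ℝ)/(n:ℝ)) ≤ (y ^ n) ^ ((1:ℝ)/(n:ℝ)) := h1
    _ = y := by
      rw [← Real.rpow_natCast y n, ← Real.rpow_mul hy]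
      rw [show (n:ℝ) * ((1:ℝ)/(n:ℝ)) = 1 by field_simp, Real.rpow_one]

lemma le_rpow_inv' {x y : ℝ} (hx : 0 ≤ x) (hy : 0 ≤ y) (n : ℕ) (hn : n ≠ 0)
    (h : y ^ n ≤ x) : y ≤ x ^ ((1 : ℝ)/(n : ℝ)) := by
  have h1 : (y ^ n) ^ ((1:ℝ)/(n:ℝ)) ≤ x ^ ((1:ℝ)/(n:ℝ)) :=
    Real.rpow_le_rpow (by positivity) h (by positivity)
  calc y = (y ^ n) ^ ((1:ℝ)/(n:ℝ)) := by
        rw [← Real.rpow_natCast y n, ← Real.rpow_mul hy]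
        rw [show (n:ℝ) * ((1:ℝ)/(n:ℝ)) = 1 by field_simp, Real.rpow_one]
    _ ≤ x ^ ((1:ℝ)/(n:ℝ)) := h1

lemma p1_c_bound (c : ℝ)
    (hc : c = 1/4 * (3/2:ℝ) ^ ((1:ℝ)/4) * ((3:ℝ) ^ ((1:ℝ)/4) + (1/3:ℝ) ^ ((3:ℝ)/4))) :
    c ≤ 43/50 * (2/5:ℝ) ^ ((1:ℝ)/2) := by
  have b1 : (3/2:ℝ) ^ ((1:ℝ)/4) ≤ 1107/1000 := by
    have := rpow_inv_le' (by norm_num : (0:ℝ) ≤ 3/2) (by norm_num : (0:ℝ) ≤ 1107/1000)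
      4 (by norm_num) (by norm_num : (3/2:ℝ) ≤ (1107/1000:ℝ) ^ 4)
    norm_num at this
    linarith [this]
  have b2 : (3:ℝ) ^ ((1:ℝ)/4) ≤ 1317/1000 := by
    have := rpow_inv_le' (by norm_num : (0:ℝ) ≤ 3) (by norm_num : (0:ℝ) ≤ 1317/1000)
      4 (by norm_num) (by norm_num : (3:ℝ) ≤ (1317/1000:ℝ) ^ 4)
    norm_num at this
    linarith [this]
  have b3eq : (1/3:ℝ) ^ ((3:ℝ)/4) = (1/27:ℝ) ^ ((1:ℝ)/4) := by
    rw [show ((3:ℝ)/4) = (3:ℝ)*((1:ℝ)/4) by norm_num,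
      Real.rpow_mul (by norm_num : (0:ℝ) ≤ 1/3)]
    congr 1
    rw [show (3:ℝ) = ((3:ℕ):ℝ) by norm_num, Real.rpow_natCast]
    norm_num
  have b3 : (1/3:ℝ) ^ ((3:ℝ)/4) ≤ 439/1000 := by
    rw [b3eq]
    have := rpow_inv_le' (by norm_num : (0:ℝ) ≤ 1/27) (by norm_num : (0:ℝ) ≤ 439/1000)
      4 (by norm_num) (by norm_num : (1/27:ℝ) ≤ (439/1000:ℝ) ^ 4)
    norm_num at this
    linarith [this]
  have b4 : (632/1000 : ℝ) ≤ (2/5:ℝ) ^ ((1:ℝ)/2) := by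
    have := le_rpow_inv' (by norm_num : (0:ℝ) ≤ 2/5) (by norm_num : (0:ℝ) ≤ 632/1000)
      2 (by norm_num) (by norm_num : (632/1000:ℝ) ^ 2 ≤ 2/5)
    norm_num at this
    linarith [this]
  have hA0 : (0:ℝ) ≤ (3/2:ℝ) ^ ((1:ℝ)/4) := Real.rpow_nonneg (by norm_num) _
  have hB0 : (0:ℝ) ≤ (3:ℝ) ^ ((1:ℝ)/4) := Real.rpow_nonneg (by norm_num) _
  have hC0 : (0:ℝ) ≤ (1/3:ℝ) ^ ((3:ℝ)/4) := Real.rpow_nonneg (by norm_num) _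
  nlinarith [mul_le_mul b1 (add_le_add b2 b3) (by linarith) (by norm_num : (0:ℝ) ≤ 1107/1000)]

/-- Main progress bound for one doubly regularized reduced-operator step:
under the Taylor-remainder bound, monotonicity of `σ̂`, the nonincreasing ratio property
of `r ↦ σ̂(r)/r^{p+1}`, the largeness condition on `M`, and `‖g‖ ≥ δ`, one has
`⟨g, -u⟩ ≥ c_p (‖g‖^{p+2}/M)^{1/(p+1)}`, with `c_p ≥ 1/3`. -/
theorem main_progress_bound
    {E : Type*} [NormedAddCommGroup E] [InnerProductSpace ℝ E]
    (p : ℕ) (hp : 1 ≤ p) (δ M : ℝ) (hδ : 0 < δ) (hM : 0 < M)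
    (σ : ℝ → ℝ) (hσ_nonneg : ∀ r, 0 ≤ r → 0 ≤ σ r)
    (hσ_mono : MonotoneOn σ (Set.Ici (0 : ℝ)))
    (hσ_small : σ ((2 * δ / (5 * M)) ^ ((1 : ℝ) / ((p : ℝ) + 1))) ≤ δ / 5)
    (hσ_ratio : AntitoneOn (fun r => σ r / r ^ (p + 1)) (Set.Ioi (0 : ℝ)))
    (α : ℝ) (hα : α = M ^ ((1 : ℝ) / ((p : ℝ) + 1)) * (2 * δ / 5) ^ ((p : ℝ) / ((p : ℝ) + 1)))
    (u g : E) (r : ℝ) (hr : r = ‖u‖)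
    (hres : ‖g + (α + M * r ^ p) • u‖ ≤ σ r)
    (hg : δ ≤ ‖g‖)
    (c : ℝ)
    (hc : c = (1 / 4) * (3 / 2 : ℝ) ^ ((p : ℝ) / (2 * ((p : ℝ) + 1))) *
      ((((p : ℝ) + 2) / (p : ℝ)) ^ ((p : ℝ) / (2 * ((p : ℝ) + 1))) +
        ((p : ℝ) / ((p : ℝ) + 2)) ^ (((p : ℝ) + 2) / (2 * ((p : ℝ) + 1))))) :
    c * ((‖g‖ ^ (p + 2) / M) ^ ((1 : ℝ) / ((p : ℝ) + 1))) ≤ ⟪g, -u⟫ ∧ (1 / 3 : ℝ) ≤ c := by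
  have hp1 : (1:ℝ) ≤ (p:ℝ) := by exact_mod_cast hp
  have hppos : (0:ℝ) < (p:ℝ) := by linarith
  have hp2 : (0:ℝ) < (p:ℝ) + 2 := by linarith
  set e : ℝ := (p:ℝ) / (2 * ((p:ℝ) + 1)) with he_def
  set f : ℝ := ((p:ℝ) + 2) / (2 * ((p:ℝ) + 1)) with hf_def
  have he : 0 ≤ e := by rw [he_def]; positivity
  have hf : 0 ≤ f := by rw [hf_def]; positivity
  clear_value e f
  have hef : e + f = 1 := by rw [he_def, hf_def]; field_simp; ring
  -- Part 2 : 1/3 ≤ c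
  have hA1 : (1:ℝ) ≤ (3/2 : ℝ) ^ e := Real.one_le_rpow (by norm_num) he
  have hB1 : (1:ℝ) ≤ (((p:ℝ) + 2) / (p:ℝ)) ^ e :=
    Real.one_le_rpow (by rw [le_div_iff₀ hppos]; linarith only []) he
  have hC1 : (p:ℝ)/((p:ℝ)+2) ≤ ((p:ℝ)/((p:ℝ)+2)) ^ f := by
    have hbase : 0 < (p:ℝ)/((p:ℝ)+2) := by positivity
    have hbase1 : (p:ℝ)/((p:ℝ)+2) ≤ 1 := by rw [div_le_one hp2]; linarith only []
    have hf1 : f ≤ 1 := by rw [hf_def, div_le_one (by positivity)]; linarith only []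
    calc (p:ℝ)/((p:ℝ)+2) = ((p:ℝ)/((p:ℝ)+2)) ^ (1:ℝ) := (Real.rpow_one _).symm
      _ ≤ ((p:ℝ)/((p:ℝ)+2)) ^ f := Real.rpow_le_rpow_of_exponent_ge hbase hbase1 hf1
  have hC13 : (1/3 : ℝ) ≤ ((p:ℝ)/((p:ℝ)+2)) ^ f := by
    have : (1/3:ℝ) ≤ (p:ℝ)/((p:ℝ)+2) := by rw [le_div_iff₀ hp2]; linarith only [hp1]
    linarith only [this, hC1]
  have hc13 : (1/3 : ℝ) ≤ c := by
    rw [hc]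
    have h1 : (4/3:ℝ) ≤ (((p:ℝ)+2)/(p:ℝ)) ^ e + ((p:ℝ)/((p:ℝ)+2)) ^ f := by
      linarith only [hB1, hC13]
    have h2 : (1:ℝ) * (4/3) ≤ (3/2:ℝ) ^ e * ((((p:ℝ)+2)/(p:ℝ)) ^ e + ((p:ℝ)/((p:ℝ)+2)) ^ f) :=
      mul_le_mul hA1 h1 (by norm_num) (by linarith only [hA1])
    linarith only [h2]
  refine ⟨?_, hc13⟩
  -- setup
  set n : ℕ := p + 1 with hn_def
  clear_value n
  have hnne : n ≠ 0 := by omega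
  have hnR : ((p:ℝ) + 1) = (n:ℝ) := by rw [hn_def]; push_cast; ring
  have hb : (0:ℝ) < 2*δ/(5*M) := by positivity
  set r₀ : ℝ := (2*δ/(5*M)) ^ ((1:ℝ)/((p:ℝ)+1)) with hr₀_def
  clear_value r₀
  have hr₀pos : 0 < r₀ := by rw [hr₀_def]; exact Real.rpow_pos_of_pos hb _
  have hr₀pow : r₀ ^ n = 2*δ/(5*M) := by
    rw [hr₀_def, hnR, ← Real.rpow_natCast ((2*δ/(5*M)) ^ ((1:ℝ)/(n:ℝ))) n,
      ← Real.rpow_mul hb.le]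
    rw [show ((1:ℝ)/(n:ℝ)) * (n:ℝ) = 1 by field_simp, Real.rpow_one]
  have hα' : α = M * r₀ ^ p := by
    have h1 : r₀ ^ p = (2*δ/(5*M)) ^ ((p:ℝ)/((p:ℝ)+1)) := by
      rw [hr₀_def, ← Real.rpow_natCast ((2*δ/(5*M)) ^ ((1:ℝ)/((p:ℝ)+1))) p,
        ← Real.rpow_mul hb.le]
      congr 1
      field_simp
    have h2 : (2*δ/(5*M)) = (2*δ/5) / M := by field_simp
    have h3 : ((2*δ/5)/M) ^ ((p:ℝ)/((p:ℝ)+1))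
        = (2*δ/5) ^ ((p:ℝ)/((p:ℝ)+1)) / M ^ ((p:ℝ)/((p:ℝ)+1)) :=
      Real.div_rpow (by positivity) hM.le _
    have h4 : M / M ^ ((p:ℝ)/((p:ℝ)+1)) = M ^ ((1:ℝ)/((p:ℝ)+1)) := by
      rw [show M / M ^ ((p:ℝ)/((p:ℝ)+1)) = M ^ (1:ℝ) / M ^ ((p:ℝ)/((p:ℝ)+1)) by
        rw [Real.rpow_one], ← Real.rpow_sub hM]
      congr 1
      field_simp
      ring
    rw [h1, h2, h3, hα, ← h4]
    ring
  have hrnn : 0 ≤ r := hr ▸ norm_nonneg u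
  have hαpos : 0 < α := by rw [hα]; positivity
  set lam : ℝ := α + M * r ^ p with hlam_def
  clear_value lam
  have hlampos : 0 < lam := by rw [hlam_def]; positivity
  -- ‖g‖ ≤ σ r + lam * r
  have hGle : ‖g‖ ≤ σ r + lam * r := by
    have h1 : ‖g‖ ≤ ‖g + lam • u‖ + ‖lam • u‖ := by
      calc ‖g‖ = ‖(g + lam • u) - lam • u‖ := by rw [add_sub_cancel_right]
        _ ≤ ‖g + lam • u‖ + ‖lam • u‖ := norm_sub_le _ _
    have h2 : ‖lam • u‖ = lam * r := by
      rw [norm_smul, Real.norm_eq_abs, abs_of_pos hlampos, hr]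
    rw [h2] at h1
    linarith only [h1, hres]
  -- r₀ ≤ r
  have hr₀r : r₀ ≤ r := by
    by_contra hlt
    push_neg at hlt
    have h1 : σ r ≤ σ r₀ :=
      hσ_mono (Set.mem_Ici.2 hrnn) (Set.mem_Ici.2 hr₀pos.le) hlt.le
    have h3 : r ^ p ≤ r₀ ^ p := pow_le_pow_left₀ hrnn hlt.le p
    have h5 : M * (r₀ ^ p * r₀) = 2*δ/5 := by
      rw [← pow_succ, ← hn_def, hr₀pow]
      field_simp
      try ring
    have h8 : (α + M * r₀ ^ p) * r₀ = 4*δ/5 := by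
      rw [hα']
      calc (M * r₀ ^ p + M * r₀ ^ p) * r₀ = 2 * (M * (r₀ ^ p * r₀)) := by ring
        _ = 4*δ/5 := by rw [h5]; ring
    have hl2 : lam ≤ α + M * r₀ ^ p := by
      rw [hlam_def]
      have := mul_le_mul_of_nonneg_left h3 hM.le
      linarith only [this]
    have h6 : lam * r ≤ (α + M * r₀ ^ p) * r :=
      mul_le_mul_of_nonneg_right hl2 hrnn
    have h7 : (α + M * r₀ ^ p) * r < (α + M * r₀ ^ p) * r₀ := by
      apply mul_lt_mul_of_pos_left hlt
      positivity
    linarith only [hGle, h1, hσ_small, h6, h7, h8, hg, hδ]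
  have hrpos : 0 < r := lt_of_lt_of_le hr₀pos hr₀r
  -- σ r ≤ (M/2) r^n
  have hσr : σ r ≤ M/2 * r ^ n := by
    have h1 : σ r / r ^ n ≤ σ r₀ / r₀ ^ n :=
      hσ_ratio (Set.mem_Ioi.2 hr₀pos) (Set.mem_Ioi.2 hrpos) hr₀r
    have h2 : σ r₀ / r₀ ^ n ≤ M/2 := by
      rw [hr₀pow, div_le_iff₀ hb]
      calc σ r₀ ≤ δ/5 := hσ_small
        _ = M/2 * (2*δ/(5*M)) := by field_simp; try ring
    have h5 : (0:ℝ) < r ^ n := by positivity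
    calc σ r = σ r / r ^ n * r ^ n := by field_simp
      _ ≤ M/2 * r ^ n := mul_le_mul_of_nonneg_right (le_trans h1 h2) h5.le
  -- ‖g‖ ≤ (5/2) M r^n, hence r ≥ (2‖g‖/(5M))^{1/n}
  have hα_le : α ≤ M * r ^ p := by
    rw [hα']
    have h := pow_le_pow_left₀ hr₀pos.le hr₀r p
    exact mul_le_mul_of_nonneg_left h hM.le
  have hrn_eq : r ^ n = r ^ p * r := by rw [hn_def, pow_succ]
  have hG52 : ‖g‖ ≤ 5/2 * M * r ^ n := by
    have h1 : lam * r ≤ 2 * M * r ^ n := by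
      rw [hlam_def, hrn_eq]
      nlinarith only [mul_le_mul_of_nonneg_right hα_le hrnn]
    linarith only [hGle, hσr, h1]
  have hGpos : 0 < ‖g‖ := lt_of_lt_of_le hδ hg
  have hX : 2*‖g‖/(5*M) ≤ r ^ n := by
    rw [div_le_iff₀ (by positivity)]
    nlinarith only [hG52]
  have hr_ge : (2*‖g‖/(5*M)) ^ ((1:ℝ)/((p:ℝ)+1)) ≤ r := by
    rw [hnR]
    exact rpow_inv_le' (by positivity) hrpos.le n hnne hX
  -- inner product identity and key bound
  set v : E := g + lam • u with hv_def
  clear_value v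
  have hvσ : ‖v‖ ≤ σ r := hres
  have hvlam : ‖v‖ ≤ lam * r / 2 := by
    have h1 : M * r ^ p * r ≤ lam * r := by
      rw [hlam_def]
      nlinarith only [mul_nonneg hαpos.le hrnn]
    calc ‖v‖ ≤ σ r := hvσ
      _ ≤ M/2 * r ^ n := hσr
      _ = (M * r ^ p * r) / 2 := by rw [hrn_eq]; ring
      _ ≤ lam * r / 2 := by linarith only [h1]
  have e1 : ⟪g, -u⟫ = lam * r^2 - ⟪v, u⟫ := by
    have h1 : ⟪v, u⟫ = ⟪g, u⟫ + lam * ⟪u, u⟫ := by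
      rw [hv_def, inner_add_left, real_inner_smul_left]
    have h2 : ⟪u, u⟫ = r^2 := by rw [real_inner_self_eq_norm_sq, hr]
    rw [inner_neg_right]
    rw [h2] at h1
    linarith only [h1]
  have e2 : ‖g‖^2 = ‖v‖^2 - 2*lam*⟪v, u⟫ + lam^2 * r^2 := by
    have hguv : g = v - lam • u := by rw [hv_def]; abel
    calc ‖g‖^2 = ‖v - lam • u‖^2 := by rw [← hguv]
      _ = ‖v‖^2 - 2*⟪v, lam • u⟫ + ‖lam • u‖^2 := norm_sub_sq_real v (lam • u)
      _ = ‖v‖^2 - 2*lam*⟪v, u⟫ + lam^2 * r^2 := by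
        rw [real_inner_smul_right, norm_smul, Real.norm_eq_abs, abs_of_pos hlampos, ← hr]
        ring
  have key : 43/50 * r * ‖g‖ ≤ ⟪g, -u⟫ := by
    rw [e1]
    have hv2 : ‖v‖^2 ≤ (lam * r / 2)^2 := by
      nlinarith only [norm_nonneg v, hvlam]
    have hmain : (2*lam) * (43/50 * r * ‖g‖) ≤ (2*lam) * (lam * r^2 - ⟪v, u⟫) := by
      nlinarith only [sq_nonneg (43/50 * (lam * r) - ‖g‖), e2, hv2]
    exact le_of_mul_le_mul_left hmain (by linarith only [hlampos])
  -- constant comparison : c ≤ 43/50 * (2/5)^{1/(p+1)}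
  have hcK : c ≤ 43/50 * (2/5 : ℝ) ^ ((1:ℝ)/((p:ℝ)+1)) := by
    rcases (by omega : p = 1 ∨ 2 ≤ p) with hp1' | hp2'
    · subst hp1'
      have hc' : c = 1/4 * (3/2:ℝ) ^ ((1:ℝ)/4) * ((3:ℝ) ^ ((1:ℝ)/4) + (1/3:ℝ) ^ ((3:ℝ)/4)) := by
        rw [hc, he_def, hf_def]
        norm_num
      have hgoal : ((1:ℝ)/(((1:ℕ):ℝ)+1)) = (1:ℝ)/2 := by norm_num
      rw [hgoal]
      exact p1_c_bound c hc'
    · have h58 : c ≤ 5/8 := by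
        have hppos' : (0:ℝ) < ((p:ℝ)+2)/(p:ℝ) := by positivity
        have g1 : (3/2 : ℝ) ^ e * (((p:ℝ)+2)/(p:ℝ)) ^ e
            = ((3*((p:ℝ)+2))/(2*(p:ℝ))) ^ e := by
          rw [← Real.mul_rpow (by norm_num) hppos'.le]
          congr 1
          field_simp
          try ring
        have am1 : ((3*((p:ℝ)+2))/(2*(p:ℝ))) ^ e * (1:ℝ) ^ f
            ≤ e * ((3*((p:ℝ)+2))/(2*(p:ℝ))) + f * 1 :=
          Real.geom_mean_le_arith_mean2_weighted he hf (by positivity) (by norm_num) hef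
        have am2 : (3/2 : ℝ) ^ e * ((p:ℝ)/((p:ℝ)+2)) ^ f
            ≤ e * (3/2) + f * ((p:ℝ)/((p:ℝ)+2)) :=
          Real.geom_mean_le_arith_mean2_weighted he hf (by norm_num) (by positivity) hef
        have hsum : e * ((3*((p:ℝ)+2))/(2*(p:ℝ))) + f * 1 + (e * (3/2) + f * ((p:ℝ)/((p:ℝ)+2)))
            = 5/2 := by
          rw [he_def, hf_def]
          field_simp
          ring
        rw [hc]
        have hone : ((1:ℝ)) ^ f = 1 := Real.one_rpow f
        rw [hone] at am1
        nlinarith only [am1, am2, g1, hsum]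
      have h125 : (125/172 : ℝ) ≤ (2/5 : ℝ) ^ ((1:ℝ)/((p:ℝ)+1)) := by
        rw [hnR]
        apply le_rpow_inv' (by norm_num) (by norm_num) n hnne
        calc (125/172 : ℝ) ^ n ≤ (125/172 : ℝ) ^ 3 := by
              apply pow_le_pow_of_le_one (by norm_num) (by norm_num)
              omega
          _ ≤ 2/5 := by norm_num
      linarith only [h58, h125]
  -- final assembly
  have hsplit : (‖g‖ ^ (p+2) / M) ^ ((1:ℝ)/((p:ℝ)+1))
      = ‖g‖ * (‖g‖/M) ^ ((1:ℝ)/((p:ℝ)+1)) := by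
    have h1 : ‖g‖ ^ (p+2) / M = ‖g‖ ^ n * (‖g‖ / M) := by
      rw [hn_def]
      field_simp
      ring
    rw [h1, Real.mul_rpow (by positivity) (by positivity)]
    congr 1
    rw [hnR, ← Real.rpow_natCast ‖g‖ n, ← Real.rpow_mul hGpos.le]
    rw [show (n:ℝ) * ((1:ℝ)/(n:ℝ)) = 1 by field_simp, Real.rpow_one]
  have h25 : ((2/5:ℝ)) ^ ((1:ℝ)/((p:ℝ)+1)) * (‖g‖/M) ^ ((1:ℝ)/((p:ℝ)+1))
      = (2*‖g‖/(5*M)) ^ ((1:ℝ)/((p:ℝ)+1)) := by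
    rw [← Real.mul_rpow (by norm_num) (by positivity)]
    congr 1
    field_simp
    try ring
  have hstep : c * ((‖g‖ ^ (p+2) / M) ^ ((1:ℝ)/((p:ℝ)+1))) ≤ 43/50 * r * ‖g‖ := by
    calc c * ((‖g‖ ^ (p+2) / M) ^ ((1:ℝ)/((p:ℝ)+1)))
        = c * (‖g‖ * (‖g‖/M) ^ ((1:ℝ)/((p:ℝ)+1))) := by rw [hsplit]
      _ ≤ (43/50 * (2/5 : ℝ) ^ ((1:ℝ)/((p:ℝ)+1))) * (‖g‖ * (‖g‖/M) ^ ((1:ℝ)/((p:ℝ)+1))) := by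
          apply mul_le_mul_of_nonneg_right hcK (by positivity)
      _ = 43/50 * ‖g‖ * ((2/5:ℝ) ^ ((1:ℝ)/((p:ℝ)+1)) * (‖g‖/M) ^ ((1:ℝ)/((p:ℝ)+1))) := by ring
      _ = 43/50 * ‖g‖ * (2*‖g‖/(5*M)) ^ ((1:ℝ)/((p:ℝ)+1)) := by rw [h25]
      _ ≤ 43/50 * ‖g‖ * r := mul_le_mul_of_nonneg_left hr_ge (by positivity)
      _ = 43/50 * r * ‖g‖ := by ring
  linarith only [hstep, key]
end

section
/- Let H be a real inner product space, g, u ∈ H, β > 0 and s ≥ 0 such that ‖g + β·u‖ ≤ s and s ≤ (1/2)·β·‖u‖. Then ⟨g, −u⟩ ≥ ‖g‖² / (2β) + (3/8)·β·‖u‖². -/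
open scoped RealInnerProductSpace

/-- If `‖g + β•u‖ ≤ s` and `s ≤ (1/2)·β·‖u‖` with `β > 0`, `s ≥ 0`,
then `⟨g, -u⟩ ≥ ‖g‖²/(2β) + (3/8)·β·‖u‖²`. -/
theorem inner_neg_lower_bound_of_residual
    {H : Type*} [NormedAddCommGroup H] [InnerProductSpace ℝ H]
    (g u : H) (β s : ℝ) (hβ : 0 < β) (hs : 0 ≤ s)
    (hres : ‖g + β • u‖ ≤ s) (hsmall : s ≤ (1 / 2) * β * ‖u‖) :
    ‖g‖ ^ 2 / (2 * β) + (3 / 8) * β * ‖u‖ ^ 2 ≤ ⟪g, -u⟫ := by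
  have hsq : ‖g + β • u‖ ^ 2 ≤ ((1 / 2) * β * ‖u‖) ^ 2 := by
    have := hres.trans hsmall
    nlinarith [norm_nonneg (g + β • u)]
  have hexp : ‖g + β • u‖ ^ 2 = ‖g‖ ^ 2 + 2 * (β * ⟪g, u⟫) + (β * ‖u‖) ^ 2 := by
    rw [norm_add_sq_real, real_inner_smul_right, norm_smul, Real.norm_eq_abs,
      abs_of_pos hβ]
  rw [inner_neg_right]
  rw [hexp] at hsq
  rw [div_add' _ _ _ (by positivity : (2 * β) ≠ 0), div_le_iff₀ (by positivity)]
  nlinarith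
end

section
/- Let E be a finite-dimensional real inner product space and Q ⊆ E a nonempty closed convex set. Let K ≥ 1, and let x_1, …, x_K ∈ E, nonzero g_1, …, g_K ∈ E and v_0, v_1, …, v_K ∈ Q be such that, for each k = 1, …, K, a_k = ⟨g_k, v_{k−1} − x_k⟩ / ‖g_k‖² and v_k = proj_Q( v_{k−1} − a_k·g_k ), where proj_Q is the Euclidean metric projection onto Q. Then for every x ∈ Q: (1/2)‖v_0 − x‖² ≥ (1/2)‖v_K − x‖² + (1/2)·Σ_{k=1}^K a_k² ‖g_k‖² + Σ_{k=1}^K a_k ⟨g_k, x_k − x⟩. -/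
open scoped RealInnerProductSpace Classical

/-- The metric projection onto a set `Q`: the point of `Q` closest to `y`
(when such a closest point exists; for a nonempty closed convex subset of a
finite-dimensional real inner product space it exists and is unique). -/
noncomputable def metricProj {E : Type*} [NormedAddCommGroup E] [InnerProductSpace ℝ E]
    (Q : Set E) (y : E) : E :=
  if h : ∃ z, z ∈ Q ∧ ∀ w ∈ Q, dist y z ≤ dist y w then h.choose else y

lemma metricProj_spec {E : Type*} [NormedAddCommGroup E] [InnerProductSpace ℝ E]
    [FiniteDimensional ℝ E] {Q : Set E} (hne : Q.Nonempty) (hclosed : IsClosed Q)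
    (hconv : Convex ℝ Q) (y : E) :
    metricProj Q y ∈ Q ∧ ∀ w ∈ Q, ⟪y - metricProj Q y, w - metricProj Q y⟫ ≤ 0 := by
  have hex : ∃ z, z ∈ Q ∧ ∀ w ∈ Q, dist y z ≤ dist y w := by
    obtain ⟨z, hz, hdz⟩ := hclosed.exists_infDist_eq_dist hne y
    exact ⟨z, hz, fun w hw => hdz ▸ Metric.infDist_le_dist_of_mem hw⟩
  rw [metricProj, dif_pos hex]
  obtain ⟨hmem, hmin⟩ := hex.choose_spec
  refine ⟨hmem, ?_⟩
  haveI : Nonempty Q := ⟨⟨_, hmem⟩⟩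
  rw [← norm_eq_iInf_iff_real_inner_le_zero hconv hmem]
  refine le_antisymm (le_ciInf fun w => ?_) (ciInf_le ⟨0, fun _ ⟨_, h⟩ => h ▸ norm_nonneg _⟩ (⟨_, hmem⟩ : Q))
  simpa [dist_eq_norm] using hmin w w.2

lemma metricProj_sq_le {E : Type*} [NormedAddCommGroup E] [InnerProductSpace ℝ E]
    [FiniteDimensional ℝ E] {Q : Set E} (hne : Q.Nonempty) (hclosed : IsClosed Q)
    (hconv : Convex ℝ Q) (y : E) {z : E} (hz : z ∈ Q) :
    ‖metricProj Q y - z‖ ^ 2 ≤ ‖y - z‖ ^ 2 := by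
  obtain ⟨hmem, hineq⟩ := metricProj_spec hne hclosed hconv y
  set p := metricProj Q y
  have h1 : ⟪y - p, z - p⟫ ≤ 0 := hineq z hz
  have h2 : ‖y - z‖ ^ 2 = ‖y - p‖ ^ 2 + 2 * ⟪y - p, p - z⟫ + ‖p - z‖ ^ 2 := by
    have := norm_add_sq_real (y - p) (p - z)
    simpa [sub_add_sub_cancel] using this
  have h3 : ⟪y - p, p - z⟫ = -⟪y - p, z - p⟫ := by
    rw [← inner_neg_right, neg_sub]
  nlinarith [sq_nonneg ‖y - p‖]

/-- Telescoping bound for the projected reduced-operator steps: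
with `a_k = ⟨g_k, v_{k−1} − x_k⟩/‖g_k‖²` and `v_k = proj_Q(v_{k−1} − a_k g_k)`,
for every `x ∈ Q`,
`(1/2)‖v_0 − x‖² ≥ (1/2)‖v_K − x‖² + (1/2)Σ a_k²‖g_k‖² + Σ a_k⟨g_k, x_k − x⟩`. -/
theorem telescoping_projection_bound
    {E : Type*} [NormedAddCommGroup E] [InnerProductSpace ℝ E] [FiniteDimensional ℝ E]
    (Q : Set E) (hne : Q.Nonempty) (hclosed : IsClosed Q) (hconv : Convex ℝ Q)
    (K : ℕ) (hK : 1 ≤ K) (x g v : ℕ → E) (a : ℕ → ℝ)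
    (hg : ∀ k, 1 ≤ k → k ≤ K → g k ≠ 0)
    (hvQ : ∀ k ≤ K, v k ∈ Q)
    (ha : ∀ k, 1 ≤ k → k ≤ K → a k = ⟪g k, v (k - 1) - x k⟫ / ‖g k‖ ^ 2)
    (hv : ∀ k, 1 ≤ k → k ≤ K → v k = metricProj Q (v (k - 1) - a k • g k)) :
    ∀ z ∈ Q,
      (1 / 2) * ‖v K - z‖ ^ 2 + (1 / 2) * ∑ k ∈ Finset.Icc 1 K, (a k) ^ 2 * ‖g k‖ ^ 2
          + ∑ k ∈ Finset.Icc 1 K, a k * ⟪g k, x k - z⟫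
        ≤ (1 / 2) * ‖v 0 - z‖ ^ 2 := by
  intro z hz
  have main : ∀ n ≤ K,
      (1 / 2) * ‖v n - z‖ ^ 2 + (1 / 2) * ∑ k ∈ Finset.Icc 1 n, (a k) ^ 2 * ‖g k‖ ^ 2
          + ∑ k ∈ Finset.Icc 1 n, a k * ⟪g k, x k - z⟫
        ≤ (1 / 2) * ‖v 0 - z‖ ^ 2 := by
    intro n
    induction n with
    | zero => simp
    | succ n ih =>
      intro hn
      have hn' : n ≤ K := le_of_lt hn
      have ih' := ih hn'
      set k := n + 1
      have hk1 : 1 ≤ k := Nat.le_add_left 1 n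
      have hkK : k ≤ K := hn
      have hsub : k - 1 = n := rfl
      have hgk : ‖g k‖ ≠ 0 := norm_ne_zero_iff.mpr (hg k hk1 hkK)
      have hak : ⟪g k, v n - x k⟫ = a k * ‖g k‖ ^ 2 := by
        rw [ha k hk1 hkK, hsub, div_mul_cancel₀]
        exact pow_ne_zero 2 hgk
      -- one step bound
      have hstep : ‖v k - z‖ ^ 2 ≤ ‖v n - z‖ ^ 2 - (a k) ^ 2 * ‖g k‖ ^ 2
          - 2 * (a k * ⟪g k, x k - z⟫) := by
        have h1 : ‖v k - z‖ ^ 2 ≤ ‖(v n - a k • g k) - z‖ ^ 2 := by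
          rw [hv k hk1 hkK, hsub]
          exact metricProj_sq_le hne hclosed hconv _ hz
        have h2 : ‖(v n - a k • g k) - z‖ ^ 2
            = ‖v n - z‖ ^ 2 - 2 * (a k * ⟪g k, v n - z⟫) + (a k) ^ 2 * ‖g k‖ ^ 2 := by
          have := norm_sub_sq_real (v n - z) (a k • g k)
          have hrw : v n - a k • g k - z = (v n - z) - a k • g k := by abel
          rw [hrw, this, real_inner_smul_right, norm_smul, real_inner_comm]
          simp only [mul_pow, Real.norm_eq_abs, sq_abs]
          try ring
        have h3 : ⟪g k, v n - z⟫ = ⟪g k, v n - x k⟫ + ⟪g k, x k - z⟫ := by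
          rw [← inner_add_right]; congr 1; abel
        rw [h2, h3, hak] at h1
        nlinarith [h1]
      rw [Finset.sum_Icc_succ_top hk1, Finset.sum_Icc_succ_top hk1]
      linarith
  exact main K le_rfl
end

section
/- Let E be a finite-dimensional real inner product space, Q ⊆ E a nonempty closed convex set, p ≥ 1 an integer, δ > 0, M₀ > 0, and let s* > 0 be such that σ̂(s*) = δ/5 for a strictly increasing function σ̂ (so s* = σ̂^{−1}(δ/5)). Define 𝓜 = max{ 2δ / (5·s*^{p+1}), M₀ } and let c_p = (1/4)·(3/2)^{p/(2(p+1))} · [ ((p+2)/p)^{p/(2(p+1))} + (p/(p+2))^{(p+2)/(2(p+1))} ]. Fix x* ∈ Q, x_0 = v_0 ∈ Q, and let K ≥ 1. Suppose that for each k = 1, …, K there are x_k ∈ E, nonzero g_k ∈ E and v_k ∈ Q with: (i) ‖g_k‖ ≥ δ; (ii) ⟨g_k, x_k − x*⟩ ≥ 0; (iii) a_k := ⟨g_k, v_{k−1} − x_k⟩ / ‖g_k‖² satisfies a_k ≥ c_p · (2𝓜)^{−1/(p+1)} · ‖g_k‖^{−p/(p+1)}; (iv) v_k = proj_Q( v_{k−1}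 − a_k·g_k ). Then K ≤ (4/5)^{2/(p+1)} · [ (R₀ / c_p) · max{ 1/s*, (5M₀/(2δ))^{1/(p+1)} } ]², where R₀ = ‖x_0 − x*‖. -/
open scoped RealInnerProductSpace Classical

lemma metricProj_norm_le {E : Type*} [NormedAddCommGroup E] [InnerProductSpace ℝ E]
    [FiniteDimensional ℝ E] {Q : Set E} (hne : Q.Nonempty) (hclosed : IsClosed Q)
    (hconv : Convex ℝ Q) (y : E) {w : E} (hw : w ∈ Q) :
    ‖metricProj Q y - w‖ ≤ ‖y - w‖ := by
  have hcomp : IsComplete Q := hclosed.isComplete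
  have hex : ∃ z, z ∈ Q ∧ ∀ w' ∈ Q, dist y z ≤ dist y w' := by
    obtain ⟨z, hz, hzmin⟩ := exists_norm_eq_iInf_of_complete_convex hne hcomp hconv y
    refine ⟨z, hz, fun w' hw' => ?_⟩
    rw [dist_eq_norm, dist_eq_norm, hzmin]
    exact ciInf_le ⟨0, Set.forall_mem_range.2 fun _ => norm_nonneg _⟩ (⟨w', hw'⟩ : Q)
  rw [metricProj, dif_pos hex]
  obtain ⟨hzQ, hzmin⟩ := hex.choose_spec
  set z := hex.choose with hzdef
  have hinf : ‖y - z‖ = ⨅ w' : Q, ‖y - w'‖ := by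
    haveI : Nonempty Q := hne.to_subtype
    refine le_antisymm (le_ciInf fun w' => ?_) (ciInf_le ⟨0, Set.forall_mem_range.2 fun _ => norm_nonneg _⟩ (⟨z, hzQ⟩ : Q))
    have := hzmin w' w'.2
    rwa [dist_eq_norm, dist_eq_norm] at this
  have hvar : ∀ w' ∈ Q, ⟪y - z, w' - z⟫ ≤ 0 :=
    (norm_eq_iInf_iff_real_inner_le_zero hconv hzQ).1 hinf
  have h1 : ‖y - w‖ ^ 2 = ‖y - z‖ ^ 2 + 2 * ⟪y - z, z - w⟫ + ‖z - w‖ ^ 2 := by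
    have : y - w = (y - z) + (z - w) := by abel
    rw [this, norm_add_sq_real]
  have h2 : ⟪y - z, z - w⟫ = - ⟪y - z, w - z⟫ := by
    rw [← inner_neg_right]; congr 1; abel
  have h3 := hvar w hw
  have h4 : ‖z - w‖ ^ 2 ≤ ‖y - w‖ ^ 2 := by nlinarith [sq_nonneg ‖y - z‖]
  have h5 := Real.sqrt_le_sqrt h4
  rwa [Real.sqrt_sq (norm_nonneg _), Real.sqrt_sq (norm_nonneg _)] at h5

/-- Complexity bound for the Universal Reduced-Operator Method of
order `p`: if for `K` iterations the stopping criterion does not trigger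
(`‖g_k‖ ≥ δ`), the weak-solution inequality `⟨g_k, x_k − x*⟩ ≥ 0` holds, the step
sizes satisfy the progress condition (iii), and the points are updated by metric
projection, then `K ≤ (4/5)^{2/(p+1)} [ (R₀/c_p) max{1/s*, (5M₀/(2δ))^{1/(p+1)}} ]²`. -/
theorem universal_reduced_operator_complexity
    {E : Type*} [NormedAddCommGroup E] [InnerProductSpace ℝ E] [FiniteDimensional ℝ E]
    (Q : Set E) (hne : Q.Nonempty) (hclosed : IsClosed Q) (hconv : Convex ℝ Q)
    (p : ℕ) (hp : 1 ≤ p) (δ M₀ sstar : ℝ) (hδ : 0 < δ) (hM₀ : 0 < M₀) (hs : 0 < sstar)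
    (σ : ℝ → ℝ) (hσ_mono : StrictMonoOn σ (Set.Ici (0 : ℝ))) (hσ_star : σ sstar = δ / 5)
    (𝓜 c : ℝ)
    (h𝓜 : 𝓜 = max (2 * δ / (5 * sstar ^ (p + 1))) M₀)
    (hc : c = (1 / 4) * (3 / 2 : ℝ) ^ ((p : ℝ) / (2 * ((p : ℝ) + 1))) *
      ((((p : ℝ) + 2) / (p : ℝ)) ^ ((p : ℝ) / (2 * ((p : ℝ) + 1))) +
        ((p : ℝ) / ((p : ℝ) + 2)) ^ (((p : ℝ) + 2) / (2 * ((p : ℝ) + 1)))))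
    (xstar : E) (hxstar : xstar ∈ Q)
    (K : ℕ) (hK : 1 ≤ K)
    (x g v : ℕ → E) (a : ℕ → ℝ)
    (hv0 : v 0 ∈ Q)
    (hgn : ∀ k, 1 ≤ k → k ≤ K → g k ≠ 0)
    (hi : ∀ k, 1 ≤ k → k ≤ K → δ ≤ ‖g k‖)
    (hii : ∀ k, 1 ≤ k → k ≤ K → 0 ≤ ⟪g k, x k - xstar⟫)
    (hadef : ∀ k, 1 ≤ k → k ≤ K → a k = ⟪g k, v (k - 1) - x k⟫ / ‖g k‖ ^ 2)
    (hiii : ∀ k, 1 ≤ k → k ≤ K →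
      c * (2 * 𝓜) ^ (-(1 : ℝ) / ((p : ℝ) + 1)) * ‖g k‖ ^ (-(p : ℝ) / ((p : ℝ) + 1)) ≤ a k)
    (hiv : ∀ k, 1 ≤ k → k ≤ K → v k = metricProj Q (v (k - 1) - a k • g k)) :
    (K : ℝ) ≤ (4 / 5 : ℝ) ^ (2 / ((p : ℝ) + 1)) *
      ((‖v 0 - xstar‖ / c) *
        max (1 / sstar) ((5 * M₀ / (2 * δ)) ^ ((1 : ℝ) / ((p : ℝ) + 1)))) ^ 2 := by
  -- basic positivity
  have hpR : (0 : ℝ) < (p : ℝ) := by exact_mod_cast Nat.lt_of_lt_of_le Nat.zero_lt_one hp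
  have hp1 : (0 : ℝ) < (p : ℝ) + 1 := by linarith
  set t : ℝ := 1 / ((p : ℝ) + 1) with ht
  have htpos : 0 < t := by positivity
  have hcpos : 0 < c := by
    rw [hc]
    have h1 : (0:ℝ) < (3 / 2 : ℝ) ^ ((p : ℝ) / (2 * ((p : ℝ) + 1))) := Real.rpow_pos_of_pos (by norm_num) _
    have h2 : (0:ℝ) < (((p : ℝ) + 2) / (p : ℝ)) ^ ((p : ℝ) / (2 * ((p : ℝ) + 1))) :=
      Real.rpow_pos_of_pos (by positivity) _
    have h3 : (0:ℝ) < ((p : ℝ) / ((p : ℝ) + 2)) ^ (((p : ℝ) + 2) / (2 * ((p : ℝ) + 1))) :=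
      Real.rpow_pos_of_pos (by positivity) _
    positivity
  have hMpos : 0 < 𝓜 := by rw [h𝓜]; exact lt_max_of_lt_right hM₀
  have h2M : (0:ℝ) < 2 * 𝓜 := by linarith
  set D : ℝ := c * (2 * 𝓜) ^ (-t) * δ ^ t with hD
  have hDpos : 0 < D := by
    have := Real.rpow_pos_of_pos h2M (-t)
    have := Real.rpow_pos_of_pos hδ t
    positivity
  set R0 : ℝ := ‖v 0 - xstar‖ with hR0
  -- step bound: D ≤ a k * ‖g k‖ and key decrease
  have hstep : ∀ k, 1 ≤ k → k ≤ K →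
      ‖v k - xstar‖ ^ 2 + D ^ 2 ≤ ‖v (k-1) - xstar‖ ^ 2 := by
    intro k hk1 hkK
    have hgpos : 0 < ‖g k‖ := lt_of_lt_of_le hδ (hi k hk1 hkK)
    have hiiik := hiii k hk1 hkK
    have hexp : -(1 : ℝ) / ((p : ℝ) + 1) = -t := by rw [ht]; ring
    rw [hexp] at hiiik
    have hapos : 0 < a k := by
      have h1 : (0:ℝ) < c * (2 * 𝓜) ^ (-t) * ‖g k‖ ^ (-(p : ℝ) / ((p : ℝ) + 1)) := by
        have := Real.rpow_pos_of_pos h2M (-t)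
        have := Real.rpow_pos_of_pos hgpos (-(p : ℝ) / ((p : ℝ) + 1))
        positivity
      linarith
    have haD : D ≤ a k * ‖g k‖ := by
      have h1s : ‖g k‖ ^ (-(p : ℝ) / ((p : ℝ) + 1)) * ‖g k‖ = ‖g k‖ ^ t := by
        have h1s' : ‖g k‖ ^ (-(p : ℝ) / ((p : ℝ) + 1)) * ‖g k‖ ^ (1:ℝ) = ‖g k‖ ^ t := by
          rw [← Real.rpow_add hgpos]
          congr 1
          rw [ht]; field_simp; ring
        simpa [Real.rpow_one] using h1s'
      have h1 : c * (2 * 𝓜) ^ (-t) * ‖g k‖ ^ (-(p : ℝ) / ((p : ℝ) + 1)) * ‖g k‖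
          = c * (2 * 𝓜) ^ (-t) * ‖g k‖ ^ t := by
        rw [mul_assoc (c * (2 * 𝓜) ^ (-t)), h1s]
      have h2 : δ ^ t ≤ ‖g k‖ ^ t := Real.rpow_le_rpow hδ.le (hi k hk1 hkK) htpos.le
      have h3 : (0:ℝ) ≤ c * (2 * 𝓜) ^ (-t) := by
        have := Real.rpow_pos_of_pos h2M (-t); positivity
      calc D = c * (2 * 𝓜) ^ (-t) * δ ^ t := hD
        _ ≤ c * (2 * 𝓜) ^ (-t) * ‖g k‖ ^ t := by
            exact mul_le_mul_of_nonneg_left h2 h3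
        _ = c * (2 * 𝓜) ^ (-t) * ‖g k‖ ^ (-(p : ℝ) / ((p : ℝ) + 1)) * ‖g k‖ := h1.symm
        _ ≤ a k * ‖g k‖ := mul_le_mul_of_nonneg_right hiiik hgpos.le
    -- inner product identity
    have hg2 : (0:ℝ) < ‖g k‖ ^ 2 := by positivity
    have hinner : ⟪g k, v (k-1) - x k⟫ = a k * ‖g k‖ ^ 2 := by
      have := hadef k hk1 hkK
      field_simp at this
      linarith
    have hsplit : a k * ‖g k‖ ^ 2 ≤ ⟪g k, v (k-1) - xstar⟫ := by
      have h1 : ⟪g k, v (k-1) - xstar⟫ = ⟪g k, v (k-1) - x k⟫ + ⟪g k, x k - xstar⟫ := by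
        rw [← inner_add_right]
        congr 1; abel
      rw [h1, hinner]
      have := hii k hk1 hkK
      linarith
    -- projection inequality
    have hproj : ‖v k - xstar‖ ≤ ‖(v (k-1) - a k • g k) - xstar‖ := by
      rw [hiv k hk1 hkK]
      exact metricProj_norm_le hne hclosed hconv _ hxstar
    have hproj2 : ‖v k - xstar‖ ^ 2 ≤ ‖(v (k-1) - a k • g k) - xstar‖ ^ 2 := by
      have := pow_le_pow_left₀ (norm_nonneg _) hproj 2
      exact this
    have hexpand : ‖(v (k-1) - a k • g k) - xstar‖ ^ 2 =
        ‖v (k-1) - xstar‖ ^ 2 - 2 * (a k * ⟪g k, v (k-1) - xstar⟫) + (a k)^2 * ‖g k‖ ^ 2 := by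
      have heq : (v (k-1) - a k • g k) - xstar = (v (k-1) - xstar) - a k • g k := by abel
      rw [heq, norm_sub_sq_real, real_inner_smul_right, real_inner_comm, norm_smul]
      simp only [Real.norm_eq_abs, mul_pow, sq_abs]
    have hDag : D ^ 2 ≤ (a k * ‖g k‖) ^ 2 := by
      exact pow_le_pow_left₀ hDpos.le haD 2
    nlinarith [mul_le_mul_of_nonneg_left hsplit hapos.le, sq_nonneg (a k * ‖g k‖)]
  -- telescoping
  have hsum : ∀ n, n ≤ K → ‖v n - xstar‖ ^ 2 + n * D ^ 2 ≤ R0 ^ 2 := by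
    intro n
    induction n with
    | zero => intro _; simp [hR0]
    | succ m ih =>
      intro hmK
      have hm : m ≤ K := Nat.le_of_succ_le hmK
      have hstepm := hstep (m+1) (Nat.le_add_left 1 m) hmK
      simp only [Nat.add_sub_cancel] at hstepm
      have hlin := ih hm
      push_cast
      have hexp2 : ((m:ℝ)+1) * D^2 = (m:ℝ)*D^2 + D^2 := by ring
      linarith
  have hKD := hsum K le_rfl
  have hKD2 : (K : ℝ) * D ^ 2 ≤ R0 ^ 2 := by
    have := sq_nonneg ‖v K - xstar‖
    linarith
  -- algebra for the RHS
  have hmax : max (1 / sstar) ((5 * M₀ / (2 * δ)) ^ t) = (5 * 𝓜 / (2 * δ)) ^ t := by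
    have h1s : (1:ℝ)/sstar = ((1/sstar) ^ ((p:ℝ)+1)) ^ t := by
      rw [← Real.rpow_mul (by positivity)]
      rw [show ((p:ℝ)+1) * t = 1 by rw [ht]; field_simp]
      rw [Real.rpow_one]
    rw [h1s]
    have hmaxr : ∀ A B : ℝ, 0 ≤ A → 0 ≤ B → max (A ^ t) (B ^ t) = (max A B) ^ t := by
      intro A B hA hB
      rcases le_total A B with h | h
      · rw [max_eq_right h, max_eq_right (Real.rpow_le_rpow hA h htpos.le)]
      · rw [max_eq_left h, max_eq_left (Real.rpow_le_rpow hB h htpos.le)]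
    rw [hmaxr _ _ (by positivity) (by positivity)]
    congr 1
    have hsp : (0:ℝ) < sstar ^ (p+1) := by positivity
    have h2 : (1/sstar) ^ ((p:ℝ)+1) = (2 * δ / (5 * sstar ^ (p+1))) * (5 / (2*δ)) := by
      rw [show ((p:ℝ)+1) = ((p+1 : ℕ) : ℝ) by push_cast; ring, Real.rpow_natCast]
      field_simp
      rw [← mul_pow, one_div, inv_mul_cancel₀ hs.ne', one_pow]
    rw [h2, show 5 * M₀ / (2*δ) = M₀ * (5 / (2*δ)) by ring,
      ← max_mul_of_nonneg _ _ (by positivity : (0:ℝ) ≤ 5 / (2*δ)), ← h𝓜]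
    ring
  rw [show (2 : ℝ) / ((p:ℝ)+1) = 2 * t by rw [ht]; ring, hmax]
  -- now show RHS = R0^2 / D^2 and conclude
  have hrw : (4/5 : ℝ) ^ (2*t) * ((R0 / c) * (5 * 𝓜 / (2*δ)) ^ t) ^ 2 * D ^ 2 = R0 ^ 2 := by
    have hppos : (0:ℝ) < 5 * 𝓜 / (2*δ) := by positivity
    have e1 : ((5 * 𝓜 / (2*δ)) ^ t) ^ 2 = (5 * 𝓜 / (2*δ)) ^ (2*t) := by
      rw [← Real.rpow_natCast ((5 * 𝓜 / (2*δ)) ^ t) 2, ← Real.rpow_mul hppos.le]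
      congr 1; push_cast; ring
    have e2 : ((2 * 𝓜) ^ (-t)) ^ 2 = (2 * 𝓜) ^ (-(2*t)) := by
      rw [← Real.rpow_natCast ((2 * 𝓜) ^ (-t)) 2, ← Real.rpow_mul h2M.le]
      congr 1; push_cast; ring
    have e3 : (δ ^ t) ^ 2 = δ ^ (2*t) := by
      rw [← Real.rpow_natCast (δ ^ t) 2, ← Real.rpow_mul hδ.le]
      congr 1; push_cast; ring
    have key : (4/5 : ℝ) ^ (2*t) * (5 * 𝓜 / (2*δ)) ^ (2*t) * (2 * 𝓜) ^ (-(2*t)) * δ ^ (2*t) = 1 := by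
      have h45 : ((4:ℝ)/5) ^ (2*t) * (5 * 𝓜 / (2*δ)) ^ (2*t) * δ ^ (2*t) = (2*𝓜) ^ (2*t) := by
        rw [← Real.mul_rpow (by norm_num) hppos.le, ← Real.mul_rpow (by positivity) hδ.le]
        congr 1
        field_simp
        ring
      rw [Real.rpow_neg h2M.le, mul_right_comm, h45]
      exact mul_inv_cancel₀ (ne_of_gt (Real.rpow_pos_of_pos h2M (2*t)))
    calc (4/5 : ℝ) ^ (2*t) * ((R0 / c) * (5 * 𝓜 / (2*δ)) ^ t) ^ 2 * D ^ 2
        = R0 ^ 2 / c ^ 2 * c ^ 2 *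
          ((4/5 : ℝ) ^ (2*t) * (5 * 𝓜 / (2*δ)) ^ (2*t) * (2 * 𝓜) ^ (-(2*t)) * δ ^ (2*t)) := by
          rw [hD]; rw [mul_pow, mul_pow, mul_pow, div_pow, e1, e2, e3]; ring
      _ = R0 ^ 2 := by rw [key, div_mul_cancel₀ _ (by positivity : (c:ℝ)^2 ≠ 0)]; ring
  have hD2 : (0:ℝ) < D ^ 2 := by positivity
  calc (K : ℝ) = (K : ℝ) * D ^ 2 / D ^ 2 := by field_simp
    _ ≤ R0 ^ 2 / D ^ 2 := by gcongr
    _ = (4/5 : ℝ) ^ (2*t) * ((R0 / c) * (5 * 𝓜 / (2*δ)) ^ t) ^ 2 := by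
        rw [← hrw, mul_div_cancel_right₀ _ (ne_of_gt hD2)]
end
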